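/- arXiv:1912.11577 — 6 statements merged into one kernel-verified Lean document; each statement's English description precedes it below -/
import Mathlib

section
/- Let (H,R) be a quasitriangular Hopf algebra with R=R¹⊗R². For any H-bimodule M, define coactions ρˡ(m)=R²⊗R¹▷m and ρʳ(m)=m◁R¹⊗R². Then M with these coactions is a Yetter-Drinfel'd-Long bimodule over H; in particular (m◁h₂)₍₀₎⊗h₁(m◁h₂)₍₁₎=m₍₀₎◁h₁⊗m₍₁₎h₂ and (h₁▷m)₍₋₁₎h₂⊗(h₁▷m)₍₀₎=h₁m₍₋₁₎⊗h₂▷m₍₀₎ hold. -/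
noncomputable section
open TensorProduct

namespace YDL

variable (K : Type) [Field K] (H : Type) [Ring H] [HopfAlgebra K H]

abbrev mu : H ⊗[K] H →ₗ[K] H := LinearMap.mul' K H
abbrev cm : H →ₗ[K] H ⊗[K] H := Coalgebra.comul
abbrev cu : H →ₗ[K] K := Coalgebra.counit
abbrev sa : H →ₗ[K] H := HopfAlgebra.antipode (R := K)
abbrev eta : K →ₗ[K] H := Algebra.linearMap K H

/-- Yetter–Drinfel'd–Long bimodule over `H` (Definition 2.1). -/
structure IsYDLong (M : Type) [AddCommGroup M] [Module K M]
    (lact : H ⊗[K] M →ₗ[K] M) (ract : M ⊗[K] H →ₗ[K] M)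
    (lcoact : M →ₗ[K] H ⊗[K] M) (rcoact : M →ₗ[K] M ⊗[K] H) : Prop where
  lact_one : ∀ m : M, lact (1 ⊗ₜ m) = m
  lact_mul : ∀ (g h : H) (m : M), lact ((g * h) ⊗ₜ m) = lact (g ⊗ₜ lact (h ⊗ₜ m))
  ract_one : ∀ m : M, ract (m ⊗ₜ 1) = m
  ract_mul : ∀ (m : M) (g h : H), ract (m ⊗ₜ (g * h)) = ract (ract (m ⊗ₜ g) ⊗ₜ h)
  bimod : ∀ (h : H) (m : M) (g : H),
    ract (lact (h ⊗ₜ m) ⊗ₜ g) = lact (h ⊗ₜ ract (m ⊗ₜ g))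
  lcoassoc : (TensorProduct.assoc K H H M).toLinearMap ∘ₗ (cm K H).rTensor M ∘ₗ lcoact
      = lcoact.lTensor H ∘ₗ lcoact
  lcounit : (TensorProduct.lid K M).toLinearMap ∘ₗ (cu K H).rTensor M ∘ₗ lcoact
      = LinearMap.id
  rcoassoc : (TensorProduct.assoc K M H H).toLinearMap ∘ₗ rcoact.rTensor H ∘ₗ rcoact
      = (cm K H).lTensor M ∘ₗ rcoact
  rcounit : (TensorProduct.rid K M).toLinearMap ∘ₗ (cu K H).lTensor M ∘ₗ rcoact
      = LinearMap.id
  bicomod : rcoact.lTensor H ∘ₗ lcoact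
      = (TensorProduct.assoc K H M H).toLinearMap ∘ₗ lcoact.rTensor H ∘ₗ rcoact
  yd23 : (mu K H).rTensor M ∘ₗ (TensorProduct.comm K H H).toLinearMap.rTensor M
        ∘ₗ (TensorProduct.assoc K H H M).symm.toLinearMap ∘ₗ lcoact.lTensor H ∘ₗ lact.lTensor H
        ∘ₗ (TensorProduct.assoc K H H M).toLinearMap
        ∘ₗ (TensorProduct.comm K H H).toLinearMap.rTensor M ∘ₗ (cm K H).rTensor M
      = TensorProduct.map (mu K H) lact
        ∘ₗ (tensorTensorTensorComm K H H H M).toLinearMap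
        ∘ₗ TensorProduct.map (cm K H) lcoact
  long24 : rcoact ∘ₗ lact
      = lact.rTensor H ∘ₗ (TensorProduct.assoc K H M H).symm.toLinearMap ∘ₗ rcoact.lTensor H
  yd25 : (mu K H).lTensor M ∘ₗ (TensorProduct.comm K H H).toLinearMap.lTensor M
        ∘ₗ (TensorProduct.assoc K M H H).toLinearMap ∘ₗ rcoact.rTensor H ∘ₗ ract.rTensor H
        ∘ₗ (TensorProduct.assoc K M H H).symm.toLinearMap
        ∘ₗ (TensorProduct.comm K H H).toLinearMap.lTensor M ∘ₗ (cm K H).lTensor M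
      = TensorProduct.map ract (mu K H)
        ∘ₗ (tensorTensorTensorComm K M H H H).toLinearMap
        ∘ₗ TensorProduct.map rcoact (cm K H)
  long26 : lcoact ∘ₗ ract
      = ract.lTensor H ∘ₗ (TensorProduct.assoc K H M H).toLinearMap ∘ₗ lcoact.rTensor H

/-- The braiding `ψ_{M,N}(m ⊗ n) = m₍₋₁₎ ▷ n₍₀₎ ⊗ m₍₀₎ ◁ n₍₁₎`. -/
def braid {M N : Type} [AddCommGroup M] [Module K M] [AddCommGroup N] [Module K N]
    (lcoactM : M →ₗ[K] H ⊗[K] M) (ractM : M ⊗[K] H →ₗ[K] M)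
    (lactN : H ⊗[K] N →ₗ[K] N) (rcoactN : N →ₗ[K] N ⊗[K] H) :
    M ⊗[K] N →ₗ[K] N ⊗[K] M :=
  TensorProduct.map lactN ractM ∘ₗ (tensorTensorTensorComm K H M N H).toLinearMap
    ∘ₗ TensorProduct.map lcoactM rcoactN

/-- The inverse braiding `ψ⁻¹_{N,M}(n ⊗ m) = m₍₀₎ ◁ S⁻¹(n₍₁₎) ⊗ S⁻¹(m₍₋₁₎) ▷ n₍₀₎`,
where `Si` is the (given) inverse of the antipode. -/
def braidInv (Si : H →ₗ[K] H) {M N : Type}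
    [AddCommGroup M] [Module K M] [AddCommGroup N] [Module K N]
    (lcoactM : M →ₗ[K] H ⊗[K] M) (ractM : M ⊗[K] H →ₗ[K] M)
    (lactN : H ⊗[K] N →ₗ[K] N) (rcoactN : N →ₗ[K] N ⊗[K] H) :
    N ⊗[K] M →ₗ[K] M ⊗[K] N :=
  TensorProduct.map ractM lactN
    ∘ₗ (TensorProduct.comm K (H ⊗[K] N) (M ⊗[K] H)).toLinearMap
    ∘ₗ (tensorTensorTensorComm K H M N H).toLinearMap
    ∘ₗ (TensorProduct.comm K (N ⊗[K] H) (H ⊗[K] M)).toLinearMap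
    ∘ₗ TensorProduct.map (Si.lTensor N ∘ₗ rcoactN) (Si.rTensor M ∘ₗ lcoactM)

/-! Structure maps of `H₁, H₂, H₃, H₄` from Example 2.4. -/

/-- `h ▷ (k ⊗ l) = hk ⊗ l`. -/
def lactA : H ⊗[K] (H ⊗[K] H) →ₗ[K] H ⊗[K] H :=
  (mu K H).rTensor H ∘ₗ (TensorProduct.assoc K H H H).symm.toLinearMap

/-- `l ⊗ h ↦ S(h₁) l h₂`. -/
def adR : H ⊗[K] H →ₗ[K] H :=
  mu K H ∘ₗ (mu K H ∘ₗ (sa K H).rTensor H ∘ₗ (TensorProduct.comm K H H).toLinearMap).rTensor H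
    ∘ₗ (TensorProduct.assoc K H H H).symm.toLinearMap ∘ₗ (cm K H).lTensor H

/-- `(k ⊗ l) ◁ h = k ⊗ S(h₁) l h₂`. -/
def ractA : (H ⊗[K] H) ⊗[K] H →ₗ[K] H ⊗[K] H :=
  (adR K H).lTensor H ∘ₗ (TensorProduct.assoc K H H H).toLinearMap

/-- `k ↦ k₁ S(k₃) ⊗ k₂`. -/
def c1 : H →ₗ[K] H ⊗[K] H :=
  (mu K H).rTensor H ∘ₗ (TensorProduct.assoc K H H H).symm.toLinearMap
    ∘ₗ ((sa K H).rTensor H ∘ₗ (TensorProduct.comm K H H).toLinearMap).lTensor H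
    ∘ₗ (cm K H).lTensor H ∘ₗ cm K H

/-- `ρˡ(k ⊗ l) = k₁ S(k₃) ⊗ (k₂ ⊗ l)`. -/
def lcoactA : H ⊗[K] H →ₗ[K] H ⊗[K] (H ⊗[K] H) :=
  (TensorProduct.assoc K H H H).toLinearMap ∘ₗ (c1 K H).rTensor H

/-- `ρʳ(k ⊗ l) = (k ⊗ l₁) ⊗ l₂`. -/
def rcoactA : H ⊗[K] H →ₗ[K] (H ⊗[K] H) ⊗[K] H :=
  (TensorProduct.assoc K H H H).symm.toLinearMap ∘ₗ (cm K H).lTensor H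

/-- `h ⊗ x ↦ h₁ x S(h₂)`. -/
def ad : H ⊗[K] H →ₗ[K] H :=
  mu K H ∘ₗ (mu K H ∘ₗ (sa K H).lTensor H ∘ₗ (TensorProduct.comm K H H).toLinearMap).lTensor H
    ∘ₗ (TensorProduct.assoc K H H H).toLinearMap ∘ₗ (cm K H).rTensor H

/-- `h ▷ (k ⊗ l) = h₁ k S(h₂) ⊗ l`. -/
def lactB : H ⊗[K] (H ⊗[K] H) →ₗ[K] H ⊗[K] H :=
  (ad K H).rTensor H ∘ₗ (TensorProduct.assoc K H H H).symm.toLinearMap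

/-- `(k ⊗ l) ◁ h = k ⊗ l h`. -/
def ractB : (H ⊗[K] H) ⊗[K] H →ₗ[K] H ⊗[K] H :=
  (mu K H).lTensor H ∘ₗ (TensorProduct.assoc K H H H).toLinearMap

/-- `ρˡ(k ⊗ l) = k₁ ⊗ (k₂ ⊗ l)`. -/
def lcoactB : H ⊗[K] H →ₗ[K] H ⊗[K] (H ⊗[K] H) :=
  (TensorProduct.assoc K H H H).toLinearMap ∘ₗ (cm K H).rTensor H

/-- `l ↦ l₂ ⊗ S(l₁) l₃`. -/
def c2 : H →ₗ[K] H ⊗[K] H :=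
  (mu K H).lTensor H ∘ₗ ((sa K H).rTensor H).lTensor H ∘ₗ (TensorProduct.assoc K H H H).toLinearMap
    ∘ₗ (TensorProduct.comm K H H).toLinearMap.rTensor H ∘ₗ (cm K H).rTensor H ∘ₗ cm K H

/-- `ρʳ(k ⊗ l) = (k ⊗ l₂) ⊗ S(l₁) l₃`. -/
def rcoactB : H ⊗[K] H →ₗ[K] (H ⊗[K] H) ⊗[K] H :=
  (TensorProduct.assoc K H H H).symm.toLinearMap ∘ₗ (c2 K H).lTensor H

/-- The `u`-map `m ↦ m₍₋₁₎ ▷ (m₍₀₎₍₀₎ ◁ m₍₀₎₍₁₎)`; the `u`-condition says it is the identity. -/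
def uMap {M : Type} [AddCommGroup M] [Module K M]
    (lact : H ⊗[K] M →ₗ[K] M) (ract : M ⊗[K] H →ₗ[K] M)
    (lcoact : M →ₗ[K] H ⊗[K] M) (rcoact : M →ₗ[K] M ⊗[K] H) : M →ₗ[K] M :=
  lact ∘ₗ ract.lTensor H ∘ₗ rcoact.lTensor H ∘ₗ lcoact

/-! Quasitriangular structures. -/

/-- `a ⊗ b ↦ (a ⊗ 1) ⊗ b`. -/
def i13 : H ⊗[K] H →ₗ[K] (H ⊗[K] H) ⊗[K] H :=
  (Algebra.TensorProduct.includeLeft (R := K) (A := H) (B := H) (S := K)).toLinearMap.rTensor H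

/-- `a ⊗ b ↦ (1 ⊗ a) ⊗ b`. -/
def i23 : H ⊗[K] H →ₗ[K] (H ⊗[K] H) ⊗[K] H :=
  (Algebra.TensorProduct.includeRight (R := K) (A := H) (B := H)).toLinearMap.rTensor H

/-- `a ⊗ b ↦ a ⊗ (1 ⊗ b)`. -/
def j13 : H ⊗[K] H →ₗ[K] H ⊗[K] (H ⊗[K] H) :=
  (Algebra.TensorProduct.includeRight (R := K) (A := H) (B := H)).toLinearMap.lTensor H

/-- `a ⊗ b ↦ a ⊗ (b ⊗ 1)`. -/
def j12 : H ⊗[K] H →ₗ[K] H ⊗[K] (H ⊗[K] H) :=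
  (Algebra.TensorProduct.includeLeft (R := K) (A := H) (B := H) (S := K)).toLinearMap.lTensor H

/-- Quasitriangular Hopf algebra (Definition 2.2, (QT1)–(QT4)). -/
structure IsQT (R : H ⊗[K] H) : Prop where
  unit : IsUnit R
  qt1 : (cm K H).rTensor H R = i13 K H R * i23 K H R
  qt2 : (cm K H).lTensor H R = j13 K H R * j12 K H R
  qt3 : ∀ h : H, (TensorProduct.comm K H H) (cm K H h) * R = R * cm K H h
  qt4l : (TensorProduct.lid K H) ((cu K H).rTensor H R) = 1
  qt4r : (TensorProduct.rid K H) ((cu K H).lTensor H R) = 1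

/-- Triangular Hopf algebra: quasitriangular with `R⁻¹ = τ(R)`. -/
structure IsTriangular (R : H ⊗[K] H) extends IsQT K H R : Prop where
  tri : R * (TensorProduct.comm K H H) R = 1 ∧ (TensorProduct.comm K H H) R * R = 1

/-- `ρˡ(m) = R² ⊗ R¹ ▷ m`. -/
def lcoactR {M : Type} [AddCommGroup M] [Module K M]
    (lact : H ⊗[K] M →ₗ[K] M) (R : H ⊗[K] H) : M →ₗ[K] H ⊗[K] M :=
  lact.lTensor H ∘ₗ (TensorProduct.assoc K H H M).toLinearMap
    ∘ₗ TensorProduct.mk K (H ⊗[K] H) M ((TensorProduct.comm K H H) R)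

/-- `ρʳ(m) = m ◁ R¹ ⊗ R²`. -/
def rcoactR {M : Type} [AddCommGroup M] [Module K M]
    (ract : M ⊗[K] H →ₗ[K] M) (R : H ⊗[K] H) : M →ₗ[K] M ⊗[K] H :=
  ract.rTensor H ∘ₗ (TensorProduct.assoc K M H H).symm.toLinearMap
    ∘ₗ (TensorProduct.mk K M (H ⊗[K] H)).flip R

/-! Coquasitriangular structures. -/

/-- The comultiplication of the tensor-product coalgebra `H ⊗ H`. -/
def cm2 : H ⊗[K] H →ₗ[K] (H ⊗[K] H) ⊗[K] (H ⊗[K] H) :=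
  (tensorTensorTensorComm K H H H H).toLinearMap ∘ₗ TensorProduct.map (cm K H) (cm K H)

/-- Convolution product on linear forms on `H ⊗ H`. -/
def conv (f g : H ⊗[K] H →ₗ[K] K) : H ⊗[K] H →ₗ[K] K :=
  LinearMap.mul' K K ∘ₗ TensorProduct.map f g ∘ₗ cm2 K H

/-- `g ⊗ h ↦ ε(g) ε(h)`, the convolution unit. -/
def epsBoth : H ⊗[K] H →ₗ[K] K :=
  LinearMap.mul' K K ∘ₗ TensorProduct.map (cu K H) (cu K H)

/-- Coquasitriangular Hopf algebra (Definition 2.3, (CQT1)–(CQT4)). -/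
structure IsCQT (z : H ⊗[K] H →ₗ[K] K) : Prop where
  inv : ∃ z' : H ⊗[K] H →ₗ[K] K, conv K H z z' = epsBoth K H ∧ conv K H z' z = epsBoth K H
  cqt1 : z ∘ₗ (mu K H).lTensor H
      = LinearMap.mul' K K ∘ₗ TensorProduct.map z z
        ∘ₗ (tensorTensorTensorComm K H H H H).toLinearMap ∘ₗ (cm K H).rTensor (H ⊗[K] H)
  cqt2 : z ∘ₗ (mu K H).rTensor H
      = LinearMap.mul' K K ∘ₗ TensorProduct.map z z
        ∘ₗ (tensorTensorTensorComm K H H H H).toLinearMap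
        ∘ₗ (TensorProduct.comm K H H).toLinearMap.lTensor (H ⊗[K] H)
        ∘ₗ (cm K H).lTensor (H ⊗[K] H)
  cqt3 : (TensorProduct.lid K H).toLinearMap
        ∘ₗ TensorProduct.map z (mu K H ∘ₗ (TensorProduct.comm K H H).toLinearMap) ∘ₗ cm2 K H
      = (TensorProduct.rid K H).toLinearMap ∘ₗ TensorProduct.map (mu K H) z ∘ₗ cm2 K H
  cqt4 : ∀ h : H, z (h ⊗ₜ 1) = cu K H h ∧ z ((1 : H) ⊗ₜ h) = cu K H h

/-- Cotriangular Hopf algebra: coquasitriangular with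
`ζ(h₁,g₁) ζ(g₂,h₂) = ε(h) ε(g)`. -/
structure IsCotriangular (z : H ⊗[K] H →ₗ[K] K) extends IsCQT K H z : Prop where
  cot : conv K H z (z ∘ₗ (TensorProduct.comm K H H).toLinearMap) = epsBoth K H

/-- `h ▷ m = ζ(h, m₍₋₁₎) m₍₀₎`. -/
def lactZ {M : Type} [AddCommGroup M] [Module K M]
    (lcoact : M →ₗ[K] H ⊗[K] M) (z : H ⊗[K] H →ₗ[K] K) : H ⊗[K] M →ₗ[K] M :=
  (TensorProduct.lid K M).toLinearMap ∘ₗ z.rTensor M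
    ∘ₗ (TensorProduct.assoc K H H M).symm.toLinearMap ∘ₗ lcoact.lTensor H

/-- `m ◁ h = m₍₀₎ ζ(h, m₍₁₎)`. -/
def ractZ {M : Type} [AddCommGroup M] [Module K M]
    (rcoact : M →ₗ[K] M ⊗[K] H) (z : H ⊗[K] H →ₗ[K] K) : M ⊗[K] H →ₗ[K] M :=
  (TensorProduct.rid K M).toLinearMap ∘ₗ z.lTensor M
    ∘ₗ (TensorProduct.comm K H H).toLinearMap.lTensor M
    ∘ₗ (TensorProduct.assoc K M H H).toLinearMap ∘ₗ rcoact.rTensor H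

end YDL

/-! Both coactions are given by letting a fixed `X ∈ H ⊗ H` act on `M`, so every axiom of a
Yetter–Drinfel'd–Long bimodule is linear (or bilinear) in the elements substituted for `R` and
can be checked on pure tensors. There each side of an axiom becomes the image of an element of
`H ⊗ H` or `H ⊗ H ⊗ H` under one linear map, and the two elements agree by (QT2) for
coassociativity, (QT4) for counitality and (QT3) for the Yetter–Drinfel'd conditions; the
remaining compatibilities hold for every `X` by the bimodule law alone. -/

namespace YDL

variable {K : Type} [Field K] {H : Type} [Ring H] [HopfAlgebra K H]
  {M : Type} [AddCommGroup M] [Module K M]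

section
variable (lact : H ⊗[K] M →ₗ[K] M)

@[simp]
theorem lcoactR_tmul (a b : H) (m : M) :
    lcoactR K H lact (a ⊗ₜ b) m = b ⊗ₜ lact (a ⊗ₜ m) := by
  simp [lcoactR]

@[simp]
theorem lcoactR_zero : lcoactR K H lact 0 = 0 := by
  ext; simp [lcoactR]

@[simp]
theorem lcoactR_add (X Y : H ⊗[K] H) :
    lcoactR K H lact (X + Y) = lcoactR K H lact X + lcoactR K H lact Y := by
  ext; simp [lcoactR]

end

section
variable (ract : M ⊗[K] H →ₗ[K] M)

@[simp]
theorem rcoactR_tmul (a b : H) (m : M) :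
    rcoactR K H ract (a ⊗ₜ b) m = ract (m ⊗ₜ a) ⊗ₜ b := by
  simp [rcoactR]

@[simp]
theorem rcoactR_zero : rcoactR K H ract 0 = 0 := by
  ext; simp [rcoactR]

@[simp]
theorem rcoactR_add (X Y : H ⊗[K] H) :
    rcoactR K H ract (X + Y) = rcoactR K H ract X + rcoactR K H ract Y := by
  ext; simp [rcoactR]

end

variable {lact : H ⊗[K] M →ₗ[K] M} {ract : M ⊗[K] H →ₗ[K] M}

theorem lcoactR_counit (lact_one : ∀ m : M, lact (1 ⊗ₜ m) = m)
    {R : H ⊗[K] H} (hR : TensorProduct.rid K H ((cu K H).lTensor H R) = 1) :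
    (TensorProduct.lid K M).toLinearMap ∘ₗ (cu K H).rTensor M ∘ₗ lcoactR K H lact R
      = LinearMap.id := by
  ext m
  have counit_eq : ∀ X : H ⊗[K] H,
      TensorProduct.lid K M ((cu K H).rTensor M (lcoactR K H lact X m))
        = lact (TensorProduct.rid K H ((cu K H).lTensor H X) ⊗ₜ m) := by
    intro X
    induction X using TensorProduct.induction_on with
    | zero => simp
    | tmul a b => simp [← smul_tmul']
    | add X Y hX hY => simp [add_tmul, hX, hY]
  simpa [hR, lact_one] using counit_eq R

theorem rcoactR_counit (ract_one : ∀ m : M, ract (m ⊗ₜ 1) = m)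
    {R : H ⊗[K] H} (hR : TensorProduct.rid K H ((cu K H).lTensor H R) = 1) :
    (TensorProduct.rid K M).toLinearMap ∘ₗ (cu K H).lTensor M ∘ₗ rcoactR K H ract R
      = LinearMap.id := by
  ext m
  have counit_eq : ∀ X : H ⊗[K] H,
      TensorProduct.rid K M ((cu K H).lTensor M (rcoactR K H ract X m))
        = ract (m ⊗ₜ TensorProduct.rid K H ((cu K H).lTensor H X)) := by
    intro X
    induction X using TensorProduct.induction_on with
    | zero => simp
    | tmul a b => simp [tmul_smul]
    | add X Y hX hY => simp [tmul_add, hX, hY]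
  simpa [hR, ract_one] using counit_eq R

theorem lcoactR_coassoc
    (lact_mul : ∀ (g h : H) (m : M), lact ((g * h) ⊗ₜ m) = lact (g ⊗ₜ lact (h ⊗ₜ m)))
    {R : H ⊗[K] H} (hR : (cm K H).lTensor H R = j13 K H R * j12 K H R) :
    (TensorProduct.assoc K H H M).toLinearMap ∘ₗ (cm K H).rTensor M ∘ₗ lcoactR K H lact R
      = (lcoactR K H lact R).lTensor H ∘ₗ lcoactR K H lact R := by
  ext m
  let F : H ⊗[K] (H ⊗[K] H) →ₗ[K] H ⊗[K] (H ⊗[K] M) :=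
    (TensorProduct.assoc K H H M).toLinearMap
      ∘ₗ (lact ∘ₗ (TensorProduct.mk K H M).flip m).lTensor (H ⊗[K] H)
      ∘ₗ (TensorProduct.comm K H (H ⊗[K] H)).toLinearMap
  have comul_eq : ∀ X : H ⊗[K] H, TensorProduct.assoc K H H M
      ((cm K H).rTensor M (lcoactR K H lact X m)) = F ((cm K H).lTensor H X) := by
    intro X
    induction X using TensorProduct.induction_on with
    | zero => simp
    | tmul a b => simp [F]
    | add X Y hX hY => simp [hX, hY]
  have twice_eq : ∀ A B : H ⊗[K] H, (lcoactR K H lact B).lTensor H (lcoactR K H lact A m)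
      = F (j13 K H B * j12 K H A) := by
    intro A B
    induction A using TensorProduct.induction_on with
    | zero => simp
    | add A A' hA hA' => simp [mul_add, hA, hA']
    | tmul a b =>
      rw [lcoactR_tmul, LinearMap.lTensor_tmul]
      induction B using TensorProduct.induction_on with
      | zero => simp
      | add B B' hB hB' => simp [add_mul, tmul_add, hB, hB']
      | tmul c d => simp [F, j13, j12, lact_mul]
  simp only [LinearMap.coe_comp, Function.comp_apply, LinearEquiv.coe_coe]
  rw [comul_eq, hR, twice_eq]

theorem rcoactR_coassoc
    (ract_mul : ∀ (m : M) (g h : H), ract (m ⊗ₜ (g * h)) = ract (ract (m ⊗ₜ g) ⊗ₜ h))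
    {R : H ⊗[K] H} (hR : (cm K H).lTensor H R = j13 K H R * j12 K H R) :
    (TensorProduct.assoc K M H H).toLinearMap ∘ₗ (rcoactR K H ract R).rTensor H
        ∘ₗ rcoactR K H ract R
      = (cm K H).lTensor M ∘ₗ rcoactR K H ract R := by
  ext m
  let F : H ⊗[K] (H ⊗[K] H) →ₗ[K] M ⊗[K] (H ⊗[K] H) :=
    (ract ∘ₗ TensorProduct.mk K M H m).rTensor (H ⊗[K] H)
  have comul_eq : ∀ X : H ⊗[K] H,
      (cm K H).lTensor M (rcoactR K H ract X m) = F ((cm K H).lTensor H X) := by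
    intro X
    induction X using TensorProduct.induction_on with
    | zero => simp
    | tmul a b => simp [F]
    | add X Y hX hY => simp [hX, hY]
  have twice_eq : ∀ A B : H ⊗[K] H, TensorProduct.assoc K M H H
      ((rcoactR K H ract B).rTensor H (rcoactR K H ract A m)) = F (j13 K H A * j12 K H B) := by
    intro A B
    induction A using TensorProduct.induction_on with
    | zero => simp
    | add A A' hA hA' => simp [add_mul, hA, hA']
    | tmul a b =>
      rw [rcoactR_tmul, LinearMap.rTensor_tmul]
      induction B using TensorProduct.induction_on with
      | zero => simp
      | add B B' hB hB' => simp [mul_add, add_tmul, hB, hB']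
      | tmul c d => simp [F, j13, j12, ract_mul]
  simp only [LinearMap.coe_comp, Function.comp_apply, LinearEquiv.coe_coe]
  rw [comul_eq, hR, twice_eq]

theorem rcoactR_comp_lact
    (bimod : ∀ (h : H) (m : M) (g : H),
      ract (lact (h ⊗ₜ m) ⊗ₜ g) = lact (h ⊗ₜ ract (m ⊗ₜ g)))
    (X : H ⊗[K] H) :
    rcoactR K H ract X ∘ₗ lact
      = lact.rTensor H ∘ₗ (TensorProduct.assoc K H M H).symm.toLinearMap
          ∘ₗ (rcoactR K H ract X).lTensor H := by
  refine TensorProduct.ext' fun h m => ?_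
  induction X using TensorProduct.induction_on with
  | zero => simp
  | tmul a b => simp [bimod]
  | add X Y hX hY => simp_all

theorem lcoactR_comp_ract
    (bimod : ∀ (h : H) (m : M) (g : H),
      ract (lact (h ⊗ₜ m) ⊗ₜ g) = lact (h ⊗ₜ ract (m ⊗ₜ g)))
    (X : H ⊗[K] H) :
    lcoactR K H lact X ∘ₗ ract
      = ract.lTensor H ∘ₗ (TensorProduct.assoc K H M H).toLinearMap
          ∘ₗ (lcoactR K H lact X).rTensor H := by
  refine TensorProduct.ext' fun m h => ?_
  induction X using TensorProduct.induction_on with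
  | zero => simp
  | tmul a b => simp [bimod]
  | add X Y hX hY => simp_all

theorem lTensor_rcoactR_comp_lcoactR
    (bimod : ∀ (h : H) (m : M) (g : H),
      ract (lact (h ⊗ₜ m) ⊗ₜ g) = lact (h ⊗ₜ ract (m ⊗ₜ g)))
    (A B : H ⊗[K] H) :
    (rcoactR K H ract B).lTensor H ∘ₗ lcoactR K H lact A
      = (TensorProduct.assoc K H M H).toLinearMap ∘ₗ (lcoactR K H lact A).rTensor H
          ∘ₗ rcoactR K H ract B := by
  ext m
  induction A using TensorProduct.induction_on with
  | zero => simp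
  | add A A' hA hA' => simp_all
  | tmul a b =>
    induction B using TensorProduct.induction_on with
    | zero => simp
    | tmul c d => simp [bimod]
    | add B B' hB hB' => simp_all

theorem lcoactR_yetterDrinfeld
    (lact_mul : ∀ (g h : H) (m : M), lact ((g * h) ⊗ₜ m) = lact (g ⊗ₜ lact (h ⊗ₜ m)))
    {R : H ⊗[K] H} (hR : ∀ h : H, TensorProduct.comm K H H (cm K H h) * R = R * cm K H h) :
    (mu K H).rTensor M ∘ₗ (TensorProduct.comm K H H).toLinearMap.rTensor M
        ∘ₗ (TensorProduct.assoc K H H M).symm.toLinearMap ∘ₗ (lcoactR K H lact R).lTensor H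
        ∘ₗ lact.lTensor H ∘ₗ (TensorProduct.assoc K H H M).toLinearMap
        ∘ₗ (TensorProduct.comm K H H).toLinearMap.rTensor M ∘ₗ (cm K H).rTensor M
      = TensorProduct.map (mu K H) lact ∘ₗ (tensorTensorTensorComm K H H H M).toLinearMap
        ∘ₗ TensorProduct.map (cm K H) (lcoactR K H lact R) := by
  refine TensorProduct.ext' fun h m => ?_
  let F : H ⊗[K] H →ₗ[K] H ⊗[K] M :=
    (lact ∘ₗ (TensorProduct.mk K H M).flip m).lTensor H
      ∘ₗ (TensorProduct.comm K H H).toLinearMap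
  have left_eq : ∀ A Y : H ⊗[K] H,
      (mu K H).rTensor M ((TensorProduct.comm K H H).toLinearMap.rTensor M
        ((TensorProduct.assoc K H H M).symm ((lcoactR K H lact A).lTensor H
          (lact.lTensor H (TensorProduct.assoc K H H M
            (TensorProduct.comm K H H Y ⊗ₜ m))))))
        = F (A * Y) := by
    intro A Y
    induction Y using TensorProduct.induction_on with
    | zero => simp
    | add Y Y' hY hY' => simp_all [add_tmul, mul_add]
    | tmul c d =>
      induction A using TensorProduct.induction_on with
      | zero => simp
      | add A A' hA hA' => simp_all [add_mul]
      | tmul a b => simp [F, lact_mul]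
  have right_eq : ∀ A Y : H ⊗[K] H,
      TensorProduct.map (mu K H) lact (tensorTensorTensorComm K H H H M
        (Y ⊗ₜ lcoactR K H lact A m)) = F (TensorProduct.comm K H H Y * A) := by
    intro A Y
    induction Y using TensorProduct.induction_on with
    | zero => simp
    | add Y Y' hY hY' => simp [add_tmul, add_mul, hY, hY']
    | tmul c d =>
      induction A using TensorProduct.induction_on with
      | zero => simp
      | add A A' hA hA' => simp_all [mul_add, tmul_add]
      | tmul a b => simp [F, lact_mul]
  simp only [LinearMap.coe_comp, Function.comp_apply, LinearEquiv.coe_coe,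
    LinearMap.rTensor_tmul, TensorProduct.map_tmul]
  rw [left_eq, right_eq, hR]

theorem rcoactR_yetterDrinfeld
    (ract_mul : ∀ (m : M) (g h : H), ract (m ⊗ₜ (g * h)) = ract (ract (m ⊗ₜ g) ⊗ₜ h))
    {R : H ⊗[K] H} (hR : ∀ h : H, TensorProduct.comm K H H (cm K H h) * R = R * cm K H h) :
    (mu K H).lTensor M ∘ₗ (TensorProduct.comm K H H).toLinearMap.lTensor M
        ∘ₗ (TensorProduct.assoc K M H H).toLinearMap ∘ₗ (rcoactR K H ract R).rTensor H
        ∘ₗ ract.rTensor H ∘ₗ (TensorProduct.assoc K M H H).symm.toLinearMap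
        ∘ₗ (TensorProduct.comm K H H).toLinearMap.lTensor M ∘ₗ (cm K H).lTensor M
      = TensorProduct.map ract (mu K H) ∘ₗ (tensorTensorTensorComm K M H H H).toLinearMap
        ∘ₗ TensorProduct.map (rcoactR K H ract R) (cm K H) := by
  refine TensorProduct.ext' fun m h => ?_
  let F : H ⊗[K] H →ₗ[K] M ⊗[K] H := (ract ∘ₗ TensorProduct.mk K M H m).rTensor H
  have left_eq : ∀ A Y : H ⊗[K] H,
      (mu K H).lTensor M ((TensorProduct.comm K H H).toLinearMap.lTensor M
        (TensorProduct.assoc K M H H ((rcoactR K H ract A).rTensor H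
          (ract.rTensor H ((TensorProduct.assoc K M H H).symm
            (m ⊗ₜ TensorProduct.comm K H H Y))))))
        = F (TensorProduct.comm K H H Y * A) := by
    intro A Y
    induction Y using TensorProduct.induction_on with
    | zero => simp
    | add Y Y' hY hY' => simp_all [tmul_add, add_mul]
    | tmul c d =>
      induction A using TensorProduct.induction_on with
      | zero => simp
      | add A A' hA hA' => simp_all [mul_add]
      | tmul a b => simp [F, ract_mul]
  have right_eq : ∀ A Y : H ⊗[K] H,
      TensorProduct.map ract (mu K H) (tensorTensorTensorComm K M H H H
        (rcoactR K H ract A m ⊗ₜ Y)) = F (A * Y) := by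
    intro A Y
    induction Y using TensorProduct.induction_on with
    | zero => simp
    | add Y Y' hY hY' => simp_all [tmul_add, mul_add]
    | tmul c d =>
      induction A using TensorProduct.induction_on with
      | zero => simp
      | add A A' hA hA' => simp_all [add_mul, add_tmul]
      | tmul a b => simp [F, ract_mul]
  simp only [LinearMap.coe_comp, Function.comp_apply, LinearEquiv.coe_coe,
    LinearMap.lTensor_tmul, TensorProduct.map_tmul]
  rw [left_eq, right_eq, hR]

end YDL

/-- over a quasitriangular Hopf algebra `(H, R)`, any
`H`-bimodule becomes a Yetter–Drinfel'd–Long bimodule via the coactions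
`ρˡ(m) = R² ⊗ R¹ ▷ m` and `ρʳ(m) = m ◁ R¹ ⊗ R²`. -/
theorem statement10 (K : Type) [Field K] (H : Type) [Ring H] [HopfAlgebra K H]
    (R : H ⊗[K] H) (hR : YDL.IsQT K H R)
    (M : Type) [AddCommGroup M] [Module K M]
    (lact : H ⊗[K] M →ₗ[K] M) (ract : M ⊗[K] H →ₗ[K] M)
    (lact_one : ∀ m : M, lact (1 ⊗ₜ m) = m)
    (lact_mul : ∀ (g h : H) (m : M), lact ((g * h) ⊗ₜ m) = lact (g ⊗ₜ lact (h ⊗ₜ m)))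
    (ract_one : ∀ m : M, ract (m ⊗ₜ 1) = m)
    (ract_mul : ∀ (m : M) (g h : H), ract (m ⊗ₜ (g * h)) = ract (ract (m ⊗ₜ g) ⊗ₜ h))
    (bimod : ∀ (h : H) (m : M) (g : H),
      ract (lact (h ⊗ₜ m) ⊗ₜ g) = lact (h ⊗ₜ ract (m ⊗ₜ g))) :
    YDL.IsYDLong K H M lact ract (YDL.lcoactR K H lact R) (YDL.rcoactR K H ract R) :=
  { lact_one := lact_one
    lact_mul := lact_mul
    ract_one := ract_one
    ract_mul := ract_mul
    bimod := bimod
    lcoassoc := YDL.lcoactR_coassoc lact_mul hR.qt2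
    lcounit := YDL.lcoactR_counit lact_one hR.qt4r
    rcoassoc := YDL.rcoactR_coassoc ract_mul hR.qt2
    rcounit := YDL.rcoactR_counit ract_one hR.qt4r
    bicomod := YDL.lTensor_rcoactR_comp_lcoactR bimod R R
    yd23 := YDL.lcoactR_yetterDrinfeld lact_mul hR.qt3
    long24 := YDL.rcoactR_comp_lact bimod R
    yd25 := YDL.rcoactR_yetterDrinfeld ract_mul hR.qt3
    long26 := YDL.lcoactR_comp_ract bimod R }
end
end

section
/- Let (H,R) be a triangular Hopf algebra and let M, N be H-bimodules viewed as Yetter-Drinfel'd-Long bimodules via ρˡ(m)=R²⊗R¹▷m, ρʳ(m)=m◁R¹⊗R². Then the braiding is a symmetry: ψ_{N,M}(ψ_{M,N}(m⊗n))=m⊗n for all m∈M, n∈N, where ψ_{M,N}(m⊗n)=R²▷n◁r¹⊗R¹▷m◁r². -/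
noncomputable section
open TensorProduct

/-! Let `H ⊗ H` act on both sides of `M ⊗ N` factorwise. Read in `M ⊗ N`-order, `ψ_{M,N}` is the
action of `R` on the left and of `τ(R)` on the right, and `ψ_{N,M}` the action of `τ(R)` on the
left and of `R` on the right. Since the two actions commute, `ψ_{N,M} ψ_{M,N}` is the action of
`τ(R) R` on both sides, and `τ(R) R = 1` is triangularity. -/

namespace YDL

variable {K : Type} [Field K] {H : Type} [Ring H] [HopfAlgebra K H]
  {M N : Type} [AddCommGroup M] [Module K M] [AddCommGroup N] [Module K N]

def tensorLact (lactM : H ⊗[K] M →ₗ[K] M) (lactN : H ⊗[K] N →ₗ[K] N) :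
    (H ⊗[K] H) ⊗[K] (M ⊗[K] N) →ₗ[K] M ⊗[K] N :=
  TensorProduct.map lactM lactN ∘ₗ (tensorTensorTensorComm K H H M N).toLinearMap

def tensorRact (ractM : M ⊗[K] H →ₗ[K] M) (ractN : N ⊗[K] H →ₗ[K] N) :
    (M ⊗[K] N) ⊗[K] (H ⊗[K] H) →ₗ[K] M ⊗[K] N :=
  TensorProduct.map ractM ractN ∘ₗ (tensorTensorTensorComm K M N H H).toLinearMap

@[simp]
lemma tensorLact_tmul (lactM : H ⊗[K] M →ₗ[K] M) (lactN : H ⊗[K] N →ₗ[K] N)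
    (a b : H) (m : M) (n : N) :
    tensorLact lactM lactN ((a ⊗ₜ b) ⊗ₜ (m ⊗ₜ n)) = lactM (a ⊗ₜ m) ⊗ₜ lactN (b ⊗ₜ n) := by
  simp [tensorLact]

@[simp]
lemma tensorRact_tmul (ractM : M ⊗[K] H →ₗ[K] M) (ractN : N ⊗[K] H →ₗ[K] N)
    (m : M) (n : N) (a b : H) :
    tensorRact ractM ractN ((m ⊗ₜ n) ⊗ₜ (a ⊗ₜ b)) = ractM (m ⊗ₜ a) ⊗ₜ ractN (n ⊗ₜ b) := by
  simp [tensorRact]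

lemma tensorLact_one (lactM : H ⊗[K] M →ₗ[K] M) (lactN : H ⊗[K] N →ₗ[K] N)
    (lact_oneM : ∀ m : M, lactM (1 ⊗ₜ m) = m) (lact_oneN : ∀ n : N, lactN (1 ⊗ₜ n) = n)
    (z : M ⊗[K] N) :
    tensorLact lactM lactN (1 ⊗ₜ z) = z := by
  induction z using TensorProduct.induction_on with
  | zero => simp
  | tmul m n => simp [Algebra.TensorProduct.one_def, lact_oneM, lact_oneN]
  | add z w hz hw => rw [tmul_add, map_add, hz, hw]

lemma tensorRact_one (ractM : M ⊗[K] H →ₗ[K] M) (ractN : N ⊗[K] H →ₗ[K] N)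
    (ract_oneM : ∀ m : M, ractM (m ⊗ₜ 1) = m) (ract_oneN : ∀ n : N, ractN (n ⊗ₜ 1) = n)
    (z : M ⊗[K] N) :
    tensorRact ractM ractN (z ⊗ₜ 1) = z := by
  induction z using TensorProduct.induction_on with
  | zero => simp
  | tmul m n => simp [Algebra.TensorProduct.one_def, ract_oneM, ract_oneN]
  | add z w hz hw => rw [add_tmul, map_add, hz, hw]

lemma tensorLact_mul (lactM : H ⊗[K] M →ₗ[K] M) (lactN : H ⊗[K] N →ₗ[K] N)
    (lact_mulM : ∀ (g h : H) (m : M), lactM ((g * h) ⊗ₜ m) = lactM (g ⊗ₜ lactM (h ⊗ₜ m)))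
    (lact_mulN : ∀ (g h : H) (n : N), lactN ((g * h) ⊗ₜ n) = lactN (g ⊗ₜ lactN (h ⊗ₜ n)))
    (x y : H ⊗[K] H) (z : M ⊗[K] N) :
    tensorLact lactM lactN ((x * y) ⊗ₜ z)
      = tensorLact lactM lactN (x ⊗ₜ tensorLact lactM lactN (y ⊗ₜ z)) := by
  induction x using TensorProduct.induction_on with
  | zero => simp
  | add x x' hx hx' => simp only [add_mul, add_tmul, map_add, hx, hx']
  | tmul a b =>
    induction y using TensorProduct.induction_on with
    | zero => simp
    | add y y' hy hy' => simp only [mul_add, add_tmul, tmul_add, map_add, hy, hy']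
    | tmul c d =>
      induction z using TensorProduct.induction_on with
      | zero => simp
      | add z w hz hw => simp only [tmul_add, map_add, hz, hw]
      | tmul m n => simp [Algebra.TensorProduct.tmul_mul_tmul, lact_mulM, lact_mulN]

lemma tensorRact_mul (ractM : M ⊗[K] H →ₗ[K] M) (ractN : N ⊗[K] H →ₗ[K] N)
    (ract_mulM : ∀ (m : M) (g h : H), ractM (m ⊗ₜ (g * h)) = ractM (ractM (m ⊗ₜ g) ⊗ₜ h))
    (ract_mulN : ∀ (n : N) (g h : H), ractN (n ⊗ₜ (g * h)) = ractN (ractN (n ⊗ₜ g) ⊗ₜ h))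
    (z : M ⊗[K] N) (x y : H ⊗[K] H) :
    tensorRact ractM ractN (z ⊗ₜ (x * y))
      = tensorRact ractM ractN (tensorRact ractM ractN (z ⊗ₜ x) ⊗ₜ y) := by
  induction x using TensorProduct.induction_on with
  | zero => simp
  | add x x' hx hx' => simp only [add_mul, add_tmul, tmul_add, map_add, hx, hx']
  | tmul a b =>
    induction y using TensorProduct.induction_on with
    | zero => simp
    | add y y' hy hy' => simp only [mul_add, tmul_add, map_add, hy, hy']
    | tmul c d =>
      induction z using TensorProduct.induction_on with
      | zero => simp
      | add z w hz hw => simp only [add_tmul, map_add, hz, hw]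
      | tmul m n => simp [Algebra.TensorProduct.tmul_mul_tmul, ract_mulM, ract_mulN]

lemma tensorRact_tensorLact (lactM : H ⊗[K] M →ₗ[K] M) (ractM : M ⊗[K] H →ₗ[K] M)
    (lactN : H ⊗[K] N →ₗ[K] N) (ractN : N ⊗[K] H →ₗ[K] N)
    (bimodM : ∀ (h : H) (m : M) (g : H),
      ractM (lactM (h ⊗ₜ m) ⊗ₜ g) = lactM (h ⊗ₜ ractM (m ⊗ₜ g)))
    (bimodN : ∀ (h : H) (n : N) (g : H),
      ractN (lactN (h ⊗ₜ n) ⊗ₜ g) = lactN (h ⊗ₜ ractN (n ⊗ₜ g)))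
    (x : H ⊗[K] H) (z : M ⊗[K] N) (y : H ⊗[K] H) :
    tensorRact ractM ractN (tensorLact lactM lactN (x ⊗ₜ z) ⊗ₜ y)
      = tensorLact lactM lactN (x ⊗ₜ tensorRact ractM ractN (z ⊗ₜ y)) := by
  induction x using TensorProduct.induction_on with
  | zero => simp
  | add x x' hx hx' => simp only [add_tmul, map_add, hx, hx']
  | tmul a b =>
    induction y using TensorProduct.induction_on with
    | zero => simp
    | add y y' hy hy' => simp only [tmul_add, map_add, hy, hy']
    | tmul c d =>
      induction z using TensorProduct.induction_on with
      | zero => simp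
      | add z w hz hw => simp only [add_tmul, tmul_add, map_add, hz, hw]
      | tmul m n => simp [bimodM, bimodN]

lemma comm_tensorLact (lactM : H ⊗[K] M →ₗ[K] M) (lactN : H ⊗[K] N →ₗ[K] N)
    (x : H ⊗[K] H) (w : N ⊗[K] M) :
    TensorProduct.comm K N M (tensorLact lactN lactM (x ⊗ₜ w))
      = tensorLact lactM lactN (TensorProduct.comm K H H x ⊗ₜ TensorProduct.comm K N M w) := by
  induction x using TensorProduct.induction_on with
  | zero => simp
  | add x x' hx hx' => simp only [add_tmul, map_add, hx, hx']
  | tmul a b =>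
    induction w using TensorProduct.induction_on with
    | zero => simp
    | add w w' hw hw' => simp only [tmul_add, map_add, hw, hw']
    | tmul n m => simp

lemma comm_tensorRact (ractM : M ⊗[K] H →ₗ[K] M) (ractN : N ⊗[K] H →ₗ[K] N)
    (w : N ⊗[K] M) (x : H ⊗[K] H) :
    TensorProduct.comm K N M (tensorRact ractN ractM (w ⊗ₜ x))
      = tensorRact ractM ractN (TensorProduct.comm K N M w ⊗ₜ TensorProduct.comm K H H x) := by
  induction x using TensorProduct.induction_on with
  | zero => simp
  | add x x' hx hx' => simp only [tmul_add, map_add, hx, hx']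
  | tmul a b =>
    induction w using TensorProduct.induction_on with
    | zero => simp
    | add w w' hw hw' => simp only [add_tmul, map_add, hw, hw']
    | tmul n m => simp

/-- In `M ⊗ N`-order, `ψ_{M,N}(m ⊗ n) = P¹ ▷ m ◁ Q² ⊗ P² ▷ n ◁ Q¹`. -/
lemma braid_lcoactR_rcoactR (lactM : H ⊗[K] M →ₗ[K] M) (ractM : M ⊗[K] H →ₗ[K] M)
    (lactN : H ⊗[K] N →ₗ[K] N) (ractN : N ⊗[K] H →ₗ[K] N)
    (bimodM : ∀ (h : H) (m : M) (g : H),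
      ractM (lactM (h ⊗ₜ m) ⊗ₜ g) = lactM (h ⊗ₜ ractM (m ⊗ₜ g)))
    (P Q : H ⊗[K] H) (z : M ⊗[K] N) :
    braid K H (lcoactR K H lactM P) ractM lactN (rcoactR K H ractN Q) z
      = TensorProduct.comm K M N (tensorLact lactM lactN
          (P ⊗ₜ tensorRact ractM ractN (z ⊗ₜ TensorProduct.comm K H H Q))) := by
  induction z using TensorProduct.induction_on with
  | zero => simp
  | add z w hz hw => simp only [map_add, add_tmul, tmul_add, hz, hw]
  | tmul m n =>
    induction P using TensorProduct.induction_on with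
    | zero => simp [braid, lcoactR]
    | add P P' hP hP' => simp_all [braid, lcoactR, add_tmul]
    | tmul a b =>
      induction Q using TensorProduct.induction_on with
      | zero => simp [braid, rcoactR]
      | add Q Q' hQ hQ' => simp_all [braid, rcoactR, tmul_add]
      | tmul c d => simp [braid, lcoactR, rcoactR, bimodM]

end YDL

open YDL in
/-- over a triangular Hopf algebra the induced braiding on
`H`-bimodules is a symmetry: `ψ_{N,M} ∘ ψ_{M,N} = id`. -/
theorem statement11 (K : Type) [Field K] (H : Type) [Ring H] [HopfAlgebra K H]
    (R : H ⊗[K] H) (hR : YDL.IsTriangular K H R)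
    (M N : Type) [AddCommGroup M] [Module K M] [AddCommGroup N] [Module K N]
    (lactM : H ⊗[K] M →ₗ[K] M) (ractM : M ⊗[K] H →ₗ[K] M)
    (lactN : H ⊗[K] N →ₗ[K] N) (ractN : N ⊗[K] H →ₗ[K] N)
    (lact_oneM : ∀ m : M, lactM (1 ⊗ₜ m) = m)
    (lact_mulM : ∀ (g h : H) (m : M), lactM ((g * h) ⊗ₜ m) = lactM (g ⊗ₜ lactM (h ⊗ₜ m)))
    (ract_oneM : ∀ m : M, ractM (m ⊗ₜ 1) = m)
    (ract_mulM : ∀ (m : M) (g h : H), ractM (m ⊗ₜ (g * h)) = ractM (ractM (m ⊗ₜ g) ⊗ₜ h))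
    (bimodM : ∀ (h : H) (m : M) (g : H),
      ractM (lactM (h ⊗ₜ m) ⊗ₜ g) = lactM (h ⊗ₜ ractM (m ⊗ₜ g)))
    (lact_oneN : ∀ n : N, lactN (1 ⊗ₜ n) = n)
    (lact_mulN : ∀ (g h : H) (n : N), lactN ((g * h) ⊗ₜ n) = lactN (g ⊗ₜ lactN (h ⊗ₜ n)))
    (ract_oneN : ∀ n : N, ractN (n ⊗ₜ 1) = n)
    (ract_mulN : ∀ (n : N) (g h : H), ractN (n ⊗ₜ (g * h)) = ractN (ractN (n ⊗ₜ g) ⊗ₜ h))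
    (bimodN : ∀ (h : H) (n : N) (g : H),
      ractN (lactN (h ⊗ₜ n) ⊗ₜ g) = lactN (h ⊗ₜ ractN (n ⊗ₜ g))) :
    YDL.braid K H (YDL.lcoactR K H lactN R) ractN lactM (YDL.rcoactR K H ractM R)
      ∘ₗ YDL.braid K H (YDL.lcoactR K H lactM R) ractM lactN (YDL.rcoactR K H ractN R)
    = LinearMap.id := by
  refine LinearMap.ext fun z => ?_
  calc _ = tensorLact lactM lactN (TensorProduct.comm K H H R ⊗ₜ tensorRact ractM ractN
            (tensorLact lactM lactN (R ⊗ₜ tensorRact ractM ractN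
              (z ⊗ₜ TensorProduct.comm K H H R)) ⊗ₜ R)) := by
        simp only [LinearMap.comp_apply, braid_lcoactR_rcoactR _ _ _ _ bimodM,
          braid_lcoactR_rcoactR _ _ _ _ bimodN, comm_tensorLact, comm_tensorRact,
          TensorProduct.comm_comm]
    _ = tensorLact lactM lactN ((TensorProduct.comm K H H R * R) ⊗ₜ
          tensorRact ractM ractN (z ⊗ₜ (TensorProduct.comm K H H R * R))) := by
        rw [tensorRact_tensorLact _ _ _ _ bimodM bimodN, tensorLact_mul _ _ lact_mulM lact_mulN,
          tensorRact_mul _ _ ract_mulM ract_mulN]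
    _ = z := by
        rw [hR.tri.2, tensorRact_one _ _ ract_oneM ract_oneN,
          tensorLact_one _ _ lact_oneM lact_oneN]
end
end

section
/- Let H be a Hopf algebra with bijective antipode. Suppose H⊗H is a Yetter-Drinfel'd-Long bimodule with left action h▷(k⊗l)=hk⊗l, right action (k⊗l)◁h=k⊗lh, left coaction ρˡ=ρ₁⊗id for some left coaction ρ₁ on H, and right coaction ρʳ=id⊗ρ₂ for some right coaction ρ₂ on H. If the braiding ψ_{H⊗H,H⊗H} is a symmetry, then writing ρˡ(1⊗1)=xᵢ⊗yᵢ⊗1 and ρʳ(1⊗1)=1⊗sᵢ⊗tᵢ, one has xᵢ⊗yᵢ=yᵢ⊗S⁻¹(xᵢ) and sᵢ⊗tᵢ=S⁻¹(tᵢ)⊗sᵢ. -/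
noncomputable section
open TensorProduct

/-!
Evaluate the symmetry `ψ = ψ⁻¹` at `(1 ⊗ 1) ⊗ (1 ⊗ 1)`. As the actions are multiplications by
`1`, both sides are explicit in `ρ₁(1) = xᵢ ⊗ yᵢ` and `ρ₂(1) = sⱼ ⊗ tⱼ`:
`(xᵢ ⊗ sⱼ) ⊗ (yᵢ ⊗ tⱼ) = (yᵢ ⊗ S⁻¹tⱼ) ⊗ (S⁻¹xᵢ ⊗ sⱼ)`.
Applying `ε` to the second factor of both pairs removes `ρ₂(1)`, since `ε ∘ S⁻¹ = ε` and the
counit axiom gives `ε(sⱼ) ε(tⱼ) = 1`; what is left is `xᵢ ⊗ yᵢ = yᵢ ⊗ S⁻¹xᵢ`. Applying `ε` to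
the first factors gives `sⱼ ⊗ tⱼ = S⁻¹tⱼ ⊗ sⱼ` in the same way.
-/

theorem counit_comp_eq_of_antipode_comp {R A : Type*} [CommSemiring R] [Semiring A]
    [HopfAlgebra R A] {T : A →ₗ[R] A} (hT : HopfAlgebra.antipode R ∘ₗ T = LinearMap.id) :
    Coalgebra.counit ∘ₗ T = Coalgebra.counit (R := R) (A := A) := by
  calc Coalgebra.counit ∘ₗ T = (Coalgebra.counit ∘ₗ HopfAlgebra.antipode R) ∘ₗ T := by
        rw [HopfAlgebra.counit_comp_antipode]
    _ = Coalgebra.counit := by rw [LinearMap.comp_assoc, hT, LinearMap.comp_id]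

section Contraction

variable {R M : Type*} [CommSemiring R] [AddCommMonoid M] [Module R M]
  (φ : M →ₗ[R] R) (T : M →ₗ[R] M)

theorem map_rid_lTensor_tensorTensorTensorComm (a b : M ⊗[R] M) :
    map ((TensorProduct.rid R M).toLinearMap ∘ₗ φ.lTensor M)
        ((TensorProduct.rid R M).toLinearMap ∘ₗ φ.lTensor M)
        (tensorTensorTensorComm R M M M M (a ⊗ₜ b))
      = LinearMap.mul' R R (map φ φ b) • a := by
  have key : map ((TensorProduct.rid R M).toLinearMap ∘ₗ φ.lTensor M)
        ((TensorProduct.rid R M).toLinearMap ∘ₗ φ.lTensor M)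
        ∘ₗ (tensorTensorTensorComm R M M M M).toLinearMap
      = (TensorProduct.rid R (M ⊗[R] M)).toLinearMap
        ∘ₗ (LinearMap.mul' R R ∘ₗ map φ φ).lTensor (M ⊗[R] M) := by
    apply TensorProduct.ext_fourfold'
    intro x y s t
    simp [TensorProduct.smul_tmul', smul_smul, mul_comm]
  simpa using LinearMap.congr_fun key (a ⊗ₜ b)

theorem map_lid_rTensor_tensorTensorTensorComm (a b : M ⊗[R] M) :
    map ((TensorProduct.lid R M).toLinearMap ∘ₗ φ.rTensor M)
        ((TensorProduct.lid R M).toLinearMap ∘ₗ φ.rTensor M)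
        (tensorTensorTensorComm R M M M M (a ⊗ₜ b))
      = LinearMap.mul' R R (map φ φ a) • b := by
  have key : map ((TensorProduct.lid R M).toLinearMap ∘ₗ φ.rTensor M)
        ((TensorProduct.lid R M).toLinearMap ∘ₗ φ.rTensor M)
        ∘ₗ (tensorTensorTensorComm R M M M M).toLinearMap
      = (TensorProduct.lid R (M ⊗[R] M)).toLinearMap
        ∘ₗ (LinearMap.mul' R R ∘ₗ map φ φ).rTensor (M ⊗[R] M) := by
    apply TensorProduct.ext_fourfold'
    intro x y s t
    simp [TensorProduct.smul_tmul', smul_smul, mul_comm]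
  simpa using LinearMap.congr_fun key (a ⊗ₜ b)

variable {φ T} (hT : φ ∘ₗ T = φ)
include hT

theorem map_rid_lTensor_map_tensorTensorTensorComm_comm (a b : M ⊗[R] M) :
    map ((TensorProduct.rid R M).toLinearMap ∘ₗ φ.lTensor M)
        ((TensorProduct.rid R M).toLinearMap ∘ₗ φ.lTensor M)
        (map (T.lTensor M) (T.rTensor M)
          (tensorTensorTensorComm R M M M M (TensorProduct.comm R M M a ⊗ₜ TensorProduct.comm R M M b)))
      = LinearMap.mul' R R (map φ φ b) • T.lTensor M (TensorProduct.comm R M M a) := by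
  have hTx (x : M) : φ (T x) = φ x := LinearMap.congr_fun hT x
  have key : map ((TensorProduct.rid R M).toLinearMap ∘ₗ φ.lTensor M)
        ((TensorProduct.rid R M).toLinearMap ∘ₗ φ.lTensor M)
        ∘ₗ map (T.lTensor M) (T.rTensor M) ∘ₗ (tensorTensorTensorComm R M M M M).toLinearMap
        ∘ₗ map (TensorProduct.comm R M M).toLinearMap (TensorProduct.comm R M M).toLinearMap
      = T.lTensor M ∘ₗ (TensorProduct.comm R M M).toLinearMap
        ∘ₗ (TensorProduct.rid R (M ⊗[R] M)).toLinearMap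
        ∘ₗ (LinearMap.mul' R R ∘ₗ map φ φ).lTensor (M ⊗[R] M) := by
    apply TensorProduct.ext_fourfold'
    intro x y s t
    simp [hTx, TensorProduct.smul_tmul', smul_smul]
  simpa using LinearMap.congr_fun key (a ⊗ₜ b)

theorem map_lid_rTensor_map_tensorTensorTensorComm_comm (a b : M ⊗[R] M) :
    map ((TensorProduct.lid R M).toLinearMap ∘ₗ φ.rTensor M)
        ((TensorProduct.lid R M).toLinearMap ∘ₗ φ.rTensor M)
        (map (T.lTensor M) (T.rTensor M)
          (tensorTensorTensorComm R M M M M (TensorProduct.comm R M M a ⊗ₜ TensorProduct.comm R M M b)))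
      = LinearMap.mul' R R (map φ φ a) • T.rTensor M (TensorProduct.comm R M M b) := by
  have hTx (x : M) : φ (T x) = φ x := LinearMap.congr_fun hT x
  have key : map ((TensorProduct.lid R M).toLinearMap ∘ₗ φ.rTensor M)
        ((TensorProduct.lid R M).toLinearMap ∘ₗ φ.rTensor M)
        ∘ₗ map (T.lTensor M) (T.rTensor M) ∘ₗ (tensorTensorTensorComm R M M M M).toLinearMap
        ∘ₗ map (TensorProduct.comm R M M).toLinearMap (TensorProduct.comm R M M).toLinearMap
      = T.rTensor M ∘ₗ (TensorProduct.comm R M M).toLinearMap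
        ∘ₗ (TensorProduct.lid R (M ⊗[R] M)).toLinearMap
        ∘ₗ (LinearMap.mul' R R ∘ₗ map φ φ).rTensor (M ⊗[R] M) := by
    apply TensorProduct.ext_fourfold'
    intro x y s t
    simp [hTx, TensorProduct.smul_tmul', smul_smul]
  simpa using LinearMap.congr_fun key (a ⊗ₜ b)

theorem eq_twist_of_tensorTensorTensorComm_eq {a b : M ⊗[R] M}
    (ha : LinearMap.mul' R R (map φ φ a) = 1) (hb : LinearMap.mul' R R (map φ φ b) = 1)
    (h : tensorTensorTensorComm R M M M M (a ⊗ₜ b)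
      = map (T.lTensor M) (T.rTensor M)
          (tensorTensorTensorComm R M M M M (TensorProduct.comm R M M a ⊗ₜ TensorProduct.comm R M M b))) :
    a = T.lTensor M (TensorProduct.comm R M M a) ∧ b = T.rTensor M (TensorProduct.comm R M M b) := by
  constructor
  · have h' := congrArg (map ((TensorProduct.rid R M).toLinearMap ∘ₗ φ.lTensor M)
      ((TensorProduct.rid R M).toLinearMap ∘ₗ φ.lTensor M)) h
    rwa [map_rid_lTensor_tensorTensorTensorComm, map_rid_lTensor_map_tensorTensorTensorComm_comm hT,
      hb, one_smul, one_smul] at h'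
  · have h' := congrArg (map ((TensorProduct.lid R M).toLinearMap ∘ₗ φ.rTensor M)
      ((TensorProduct.lid R M).toLinearMap ∘ₗ φ.rTensor M)) h
    rwa [map_lid_rTensor_tensorTensorTensorComm, map_lid_rTensor_map_tensorTensorTensorComm_comm hT,
      ha, one_smul, one_smul] at h'

end Contraction

namespace YDL

variable {K : Type} [Field K] {H : Type} [Ring H] [HopfAlgebra K H] (ρ₁ ρ₂ : H →ₗ[K] H ⊗[K] H)

theorem braid_one_tmul_one :
    braid K H ((TensorProduct.assoc K H H H).toLinearMap ∘ₗ ρ₁.rTensor H) (ractB K H)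
        (lactA K H) ((TensorProduct.assoc K H H H).symm.toLinearMap ∘ₗ ρ₂.lTensor H)
        (((1 : H) ⊗ₜ[K] (1 : H)) ⊗ₜ ((1 : H) ⊗ₜ[K] (1 : H)))
      = tensorTensorTensorComm K H H H H (ρ₁ 1 ⊗ₜ ρ₂ 1) := by
  have key : map (lactA K H) (ractB K H)
        ∘ₗ (tensorTensorTensorComm K H (H ⊗[K] H) (H ⊗[K] H) H).toLinearMap
        ∘ₗ map ((TensorProduct.assoc K H H H).toLinearMap ∘ₗ (TensorProduct.mk K _ H).flip 1)
          ((TensorProduct.assoc K H H H).symm.toLinearMap ∘ₗ TensorProduct.mk K H _ 1)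
      = (tensorTensorTensorComm K H H H H).toLinearMap := by
    apply TensorProduct.ext_fourfold'
    intro x y s t
    simp [lactA, ractB]
  simpa [braid] using LinearMap.congr_fun key (ρ₁ 1 ⊗ₜ ρ₂ 1)

theorem braidInv_one_tmul_one (Si : H →ₗ[K] H) :
    braidInv K H Si ((TensorProduct.assoc K H H H).toLinearMap ∘ₗ ρ₁.rTensor H) (ractB K H)
        (lactA K H) ((TensorProduct.assoc K H H H).symm.toLinearMap ∘ₗ ρ₂.lTensor H)
        (((1 : H) ⊗ₜ[K] (1 : H)) ⊗ₜ ((1 : H) ⊗ₜ[K] (1 : H)))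
      = map (Si.lTensor H) (Si.rTensor H) (tensorTensorTensorComm K H H H H
          (TensorProduct.comm K H H (ρ₁ 1) ⊗ₜ TensorProduct.comm K H H (ρ₂ 1))) := by
  have key : map (ractB K H) (lactA K H)
        ∘ₗ (TensorProduct.comm K (H ⊗[K] (H ⊗[K] H)) ((H ⊗[K] H) ⊗[K] H)).toLinearMap
        ∘ₗ (tensorTensorTensorComm K H (H ⊗[K] H) (H ⊗[K] H) H).toLinearMap
        ∘ₗ (TensorProduct.comm K ((H ⊗[K] H) ⊗[K] H) (H ⊗[K] (H ⊗[K] H))).toLinearMap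
        ∘ₗ map (Si.lTensor _ ∘ₗ (TensorProduct.assoc K H H H).symm.toLinearMap
            ∘ₗ TensorProduct.mk K H _ 1)
          (Si.rTensor _ ∘ₗ (TensorProduct.assoc K H H H).toLinearMap
            ∘ₗ (TensorProduct.mk K _ H).flip 1)
      = map (Si.lTensor H) (Si.rTensor H) ∘ₗ (tensorTensorTensorComm K H H H H).toLinearMap
        ∘ₗ map (TensorProduct.comm K H H).toLinearMap (TensorProduct.comm K H H).toLinearMap
        ∘ₗ (TensorProduct.comm K _ _).toLinearMap := by
    apply TensorProduct.ext_fourfold'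
    intro s t x y
    simp [lactA, ractB]
  simpa [braidInv] using LinearMap.congr_fun key (ρ₂ 1 ⊗ₜ ρ₁ 1)

theorem epsBoth_apply_one_of_lcounit
    (h : (TensorProduct.lid K (H ⊗[K] H)).toLinearMap ∘ₗ (cu K H).rTensor (H ⊗[K] H)
      ∘ₗ (TensorProduct.assoc K H H H).toLinearMap ∘ₗ ρ₁.rTensor H = LinearMap.id) :
    epsBoth K H (ρ₁ 1) = 1 := by
  have key : epsBoth K H ∘ₗ (TensorProduct.lid K (H ⊗[K] H)).toLinearMap
      ∘ₗ (cu K H).rTensor (H ⊗[K] H) ∘ₗ (TensorProduct.assoc K H H H).toLinearMap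
      ∘ₗ (TensorProduct.mk K _ H).flip 1 = epsBoth K H := by
    apply TensorProduct.ext'
    intro x y
    simp [epsBoth, mul_comm]
  have h1 := congrArg (epsBoth K H) (LinearMap.congr_fun h ((1 : H) ⊗ₜ[K] (1 : H)))
  simp only [LinearMap.comp_apply, LinearMap.rTensor_tmul, LinearMap.id_apply] at h1
  rw [← LinearMap.congr_fun key (ρ₁ 1)]
  simpa [epsBoth] using h1

theorem epsBoth_apply_one_of_rcounit
    (h : (TensorProduct.rid K (H ⊗[K] H)).toLinearMap ∘ₗ (cu K H).lTensor (H ⊗[K] H)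
      ∘ₗ (TensorProduct.assoc K H H H).symm.toLinearMap ∘ₗ ρ₂.lTensor H = LinearMap.id) :
    epsBoth K H (ρ₂ 1) = 1 := by
  have key : epsBoth K H ∘ₗ (TensorProduct.rid K (H ⊗[K] H)).toLinearMap
      ∘ₗ (cu K H).lTensor (H ⊗[K] H) ∘ₗ (TensorProduct.assoc K H H H).symm.toLinearMap
      ∘ₗ TensorProduct.mk K H _ 1 = epsBoth K H := by
    apply TensorProduct.ext'
    intro s t
    simp [epsBoth, mul_comm]
  have h1 := congrArg (epsBoth K H) (LinearMap.congr_fun h ((1 : H) ⊗ₜ[K] (1 : H)))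
  simp only [LinearMap.comp_apply, LinearMap.lTensor_tmul, LinearMap.id_apply] at h1
  rw [← LinearMap.congr_fun key (ρ₂ 1)]
  simpa [epsBoth] using h1

end YDL

/-- if `H ⊗ H` (with `h ▷ (k⊗l) = hk⊗l`, `(k⊗l) ◁ h = k⊗lh`,
`ρˡ = ρ₁ ⊗ id`, `ρʳ = id ⊗ ρ₂`) is a Yetter–Drinfel'd–Long bimodule whose
braiding is a symmetry, then writing `ρ₁(1) = xᵢ ⊗ yᵢ` and `ρ₂(1) = sᵢ ⊗ tᵢ`
one has `xᵢ ⊗ yᵢ = yᵢ ⊗ S⁻¹(xᵢ)` and `sᵢ ⊗ tᵢ = S⁻¹(tᵢ) ⊗ sᵢ`. -/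
theorem statement12 (K : Type) [Field K] (H : Type) [Ring H] [HopfAlgebra K H]
    (Si : H →ₗ[K] H)
    (hSi : YDL.sa K H ∘ₗ Si = LinearMap.id ∧ Si ∘ₗ YDL.sa K H = LinearMap.id)
    (ρ₁ : H →ₗ[K] H ⊗[K] H) (ρ₂ : H →ₗ[K] H ⊗[K] H)
    (hYD : YDL.IsYDLong K H (H ⊗[K] H) (YDL.lactA K H) (YDL.ractB K H)
      ((TensorProduct.assoc K H H H).toLinearMap ∘ₗ ρ₁.rTensor H)
      ((TensorProduct.assoc K H H H).symm.toLinearMap ∘ₗ ρ₂.lTensor H))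
    (hsym :
      YDL.braid K H ((TensorProduct.assoc K H H H).toLinearMap ∘ₗ ρ₁.rTensor H)
          (YDL.ractB K H) (YDL.lactA K H)
          ((TensorProduct.assoc K H H H).symm.toLinearMap ∘ₗ ρ₂.lTensor H)
      = YDL.braidInv K H Si ((TensorProduct.assoc K H H H).toLinearMap ∘ₗ ρ₁.rTensor H)
          (YDL.ractB K H) (YDL.lactA K H)
          ((TensorProduct.assoc K H H H).symm.toLinearMap ∘ₗ ρ₂.lTensor H)) :
    ρ₁ 1 = Si.lTensor H ((TensorProduct.comm K H H) (ρ₁ 1))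
    ∧ ρ₂ 1 = Si.rTensor H ((TensorProduct.comm K H H) (ρ₂ 1)) := by
  have hsym₁ := LinearMap.congr_fun hsym (((1 : H) ⊗ₜ[K] (1 : H)) ⊗ₜ ((1 : H) ⊗ₜ[K] (1 : H)))
  rw [YDL.braid_one_tmul_one, YDL.braidInv_one_tmul_one] at hsym₁
  exact eq_twist_of_tensorTensorTensorComm_eq (counit_comp_eq_of_antipode_comp hSi.1)
    (YDL.epsBoth_apply_one_of_lcounit ρ₁ hYD.lcounit)
    (YDL.epsBoth_apply_one_of_rcounit ρ₂ hYD.rcounit) hsym₁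
end
end

section
/- Let H be a Hopf algebra with bijective antipode and let H₃=H⊗H be the Yetter-Drinfel'd-Long bimodule with h▷(k⊗l)=hk⊗l, (k⊗l)◁h=k⊗lh, ρˡ(k⊗l)=k₁S(k₃)⊗(k₂⊗l), ρʳ(k⊗l)=(k⊗l₂)⊗S(l₁)l₃. Then the braiding ψ_{H₃,H₃} is a symmetry if and only if H is cocommutative. -/
noncomputable section
open TensorProduct

/-! In the convolution algebra `Hom(H, H ⊗ H)` the algebra maps `ι₁ x = x ⊗ 1` and `ι₂ x = 1 ⊗ x`
satisfy `ι₁ * ι₂ = Δ` and `ι₂ * ι₁ = τ ∘ Δ`, and `ιᵢ ∘ S` is the convolution inverse of `ιᵢ`.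
The coactions of `H₃` are built from `c₁ = ι₁ * ι₂ * (ι₁ ∘ S)` and `c₂ = (ι₂ ∘ S) * ι₁ * ι₂`, so
`c₂ = ι₁` iff `ι₁` and `ι₂` commute, i.e. iff `H` is cocommutative; then also `c₁ = ι₂`, and `ψ` is
the flip. Conversely `ψ (ψ ((1 ⊗ l) ⊗ (1 ⊗ 1))) = (1 ⊗ l₂) ⊗ (1 ⊗ S(l₁) l₃)`, so `ψ ∘ ψ = id`
forces `c₂ = ι₁`. -/

section Convolution

open Algebra.TensorProduct LinearMap WithConv

variable {R C A B : Type*} [CommSemiring R]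

section ConvMul

variable [AddCommMonoid C] [Module R C] [Coalgebra R C] [Semiring A] [Algebra R A]

theorem LinearMap.ofConv_convMul_convMul (f g h : C →ₗ[R] A) :
    (toConv f * toConv g * toConv h).ofConv = mul' R A ∘ₗ (mul' R A).rTensor A
      ∘ₗ TensorProduct.map (TensorProduct.map f g) h ∘ₗ (Coalgebra.comul (R := R)).rTensor C
      ∘ₗ Coalgebra.comul (R := R) := by
  simp only [LinearMap.convMul_def, ofConv_toConv, ← map_comp_rTensor, rTensor_comp_map,
    ← comp_assoc]

theorem LinearMap.ofConv_convMul_convMul' (f g h : C →ₗ[R] A) :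
    (toConv f * (toConv g * toConv h)).ofConv = mul' R A ∘ₗ (mul' R A).lTensor A
      ∘ₗ TensorProduct.map f (TensorProduct.map g h) ∘ₗ (Coalgebra.comul (R := R)).lTensor C
      ∘ₗ Coalgebra.comul (R := R) := by
  simp only [LinearMap.convMul_def, ofConv_toConv, ← map_comp_lTensor, lTensor_comp_map,
    ← comp_assoc]

end ConvMul

section IncludeLeftRight

variable (R A) [Semiring A] [Algebra R A] [Coalgebra R A]

theorem Algebra.TensorProduct.includeLeft_convMul_includeRight :
    toConv (includeLeft : A →ₐ[R] A ⊗[R] A).toLinearMap *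
      toConv (includeRight : A →ₐ[R] A ⊗[R] A).toLinearMap =
      toConv (Coalgebra.comul (R := R)) := by
  have h : mul' R (A ⊗[R] A) ∘ₗ _root_.TensorProduct.map
      (includeLeft : A →ₐ[R] A ⊗[R] A).toLinearMap
      (includeRight : A →ₐ[R] A ⊗[R] A).toLinearMap = LinearMap.id := by
    ext a b
    simp
  rw [LinearMap.convMul_def, ofConv_toConv, ofConv_toConv, ← comp_assoc, h, id_comp]

theorem Algebra.TensorProduct.includeRight_convMul_includeLeft :
    toConv (includeRight : A →ₐ[R] A ⊗[R] A).toLinearMap *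
      toConv (includeLeft : A →ₐ[R] A ⊗[R] A).toLinearMap =
      toConv ((_root_.TensorProduct.comm R A A).toLinearMap ∘ₗ Coalgebra.comul (R := R)) := by
  have h : mul' R (A ⊗[R] A) ∘ₗ _root_.TensorProduct.map
      (includeRight : A →ₐ[R] A ⊗[R] A).toLinearMap
      (includeLeft : A →ₐ[R] A ⊗[R] A).toLinearMap =
      (_root_.TensorProduct.comm R A A).toLinearMap := by
    ext a b
    simp
  rw [LinearMap.convMul_def, ofConv_toConv, ofConv_toConv, ← comp_assoc, h]

theorem Algebra.TensorProduct.commute_includeLeft_includeRight_iff :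
    Commute (toConv (includeLeft : A →ₐ[R] A ⊗[R] A).toLinearMap)
        (toConv (includeRight : A →ₐ[R] A ⊗[R] A).toLinearMap) ↔
      (_root_.TensorProduct.comm R A A).toLinearMap ∘ₗ Coalgebra.comul (R := R) =
        Coalgebra.comul := by
  rw [Commute, SemiconjBy, includeLeft_convMul_includeRight, includeRight_convMul_includeLeft,
    toConv_injective.eq_iff, eq_comm]

end IncludeLeftRight

theorem Algebra.TensorProduct.map_includeRight_includeRight_injective
    [Semiring A] [Bialgebra R A] [Semiring B] [Algebra R B] :
    Function.Injective (_root_.TensorProduct.map (includeRight : B →ₐ[R] A ⊗[R] B).toLinearMap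
      (includeRight : B →ₐ[R] A ⊗[R] B).toLinearMap) := by
  let ε₁ : A ⊗[R] B →ₗ[R] B := _root_.TensorProduct.lid R B ∘ₗ (Coalgebra.counit (R := R)).rTensor B
  have hε₁ : ε₁ ∘ₗ (includeRight : B →ₐ[R] A ⊗[R] B).toLinearMap = .id := by
    ext b
    simp [ε₁]
  refine Function.LeftInverse.injective (g := _root_.TensorProduct.map ε₁ ε₁) fun x ↦ ?_
  rw [← comp_apply, ← _root_.TensorProduct.map_comp, hε₁, _root_.TensorProduct.map_id, id_apply]

variable [Semiring A] [HopfAlgebra R A] [Semiring B] [Algebra R B]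

def AlgHom.convUnit (f : A →ₐ[R] B) : (WithConv (A →ₗ[R] B))ˣ where
  val := toConv f.toLinearMap
  inv := toConv (f.toLinearMap ∘ₗ HopfAlgebra.antipode R)
  val_inv := by
    have h := algHom_comp_convMul_distrib f (toConv LinearMap.id) (toConv (HopfAlgebra.antipode R))
    simp only [id_mul_antipode, LinearMap.comp_id] at h
    ext a
    simp [← h]
  inv_val := by
    have h := algHom_comp_convMul_distrib f (toConv (HopfAlgebra.antipode R)) (toConv LinearMap.id)
    simp only [antipode_mul_id, LinearMap.comp_id] at h
    ext a
    simp [← h]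

@[simp] theorem AlgHom.val_convUnit (f : A →ₐ[R] B) :
    (f.convUnit : WithConv (A →ₗ[R] B)) = toConv f.toLinearMap := rfl

@[simp] theorem AlgHom.val_inv_convUnit (f : A →ₐ[R] B) :
    ((f.convUnit⁻¹ : (WithConv (A →ₗ[R] B))ˣ) : WithConv (A →ₗ[R] B)) =
      toConv (f.toLinearMap ∘ₗ HopfAlgebra.antipode R) := rfl

end Convolution

namespace YDL

open Algebra.TensorProduct LinearMap WithConv

variable (K : Type) [Field K] (H : Type) [Ring H] [HopfAlgebra K H]

theorem toConv_c1 : toConv (c1 K H) =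
    toConv (includeLeft : H →ₐ[K] H ⊗[K] H).toLinearMap *
      (toConv (includeRight : H →ₐ[K] H ⊗[K] H).toLinearMap *
        toConv ((includeLeft : H →ₐ[K] H ⊗[K] H).toLinearMap ∘ₗ sa K H)) := by
  apply WithConv.ext
  rw [ofConv_convMul_convMul']
  have key : (mu K H).rTensor H ∘ₗ (TensorProduct.assoc K H H H).symm.toLinearMap
      ∘ₗ ((sa K H).rTensor H ∘ₗ (TensorProduct.comm K H H).toLinearMap).lTensor H
      = mul' K (H ⊗[K] H) ∘ₗ (mul' K (H ⊗[K] H)).lTensor (H ⊗[K] H)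
        ∘ₗ TensorProduct.map (includeLeft : H →ₐ[K] H ⊗[K] H).toLinearMap
          (TensorProduct.map (includeRight : H →ₐ[K] H ⊗[K] H).toLinearMap
            ((includeLeft : H →ₐ[K] H ⊗[K] H).toLinearMap ∘ₗ sa K H)) := by
    ext a b c
    simp
  exact congrArg (· ∘ₗ (cm K H).lTensor H ∘ₗ cm K H) key

theorem toConv_c2 : toConv (c2 K H) =
    toConv ((includeRight : H →ₐ[K] H ⊗[K] H).toLinearMap ∘ₗ sa K H) *
      toConv (includeLeft : H →ₐ[K] H ⊗[K] H).toLinearMap *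
      toConv (includeRight : H →ₐ[K] H ⊗[K] H).toLinearMap := by
  apply WithConv.ext
  rw [ofConv_convMul_convMul]
  have key : (mu K H).lTensor H ∘ₗ ((sa K H).rTensor H).lTensor H
      ∘ₗ (TensorProduct.assoc K H H H).toLinearMap
      ∘ₗ (TensorProduct.comm K H H).toLinearMap.rTensor H
      = mul' K (H ⊗[K] H) ∘ₗ (mul' K (H ⊗[K] H)).rTensor (H ⊗[K] H)
        ∘ₗ TensorProduct.map (TensorProduct.map
            ((includeRight : H →ₐ[K] H ⊗[K] H).toLinearMap ∘ₗ sa K H)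
            (includeLeft : H →ₐ[K] H ⊗[K] H).toLinearMap)
          (includeRight : H →ₐ[K] H ⊗[K] H).toLinearMap := by
    ext a b c
    simp
  exact congrArg (· ∘ₗ (cm K H).rTensor H ∘ₗ cm K H) key

theorem c1_eq_includeRight_of_cocomm
    (hc : (TensorProduct.comm K H H).toLinearMap ∘ₗ cm K H = cm K H) :
    c1 K H = (includeRight : H →ₐ[K] H ⊗[K] H).toLinearMap := by
  apply toConv_injective
  rw [toConv_c1, ← mul_assoc, ((commute_includeLeft_includeRight_iff K H).mpr hc).eq, mul_assoc,
    ← AlgHom.val_inv_convUnit, ← AlgHom.val_convUnit includeLeft, Units.mul_inv, mul_one]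

theorem c2_eq_includeLeft_iff :
    c2 K H = (includeLeft : H →ₐ[K] H ⊗[K] H).toLinearMap ↔
      (TensorProduct.comm K H H).toLinearMap ∘ₗ cm K H = cm K H := by
  rw [← commute_includeLeft_includeRight_iff, ← toConv_injective.eq_iff, toConv_c2, mul_assoc,
    ← AlgHom.val_inv_convUnit, ← AlgHom.val_convUnit includeRight, Units.inv_mul_eq_iff_eq_mul,
    commute_iff_eq]

abbrev braidH3 : (H ⊗[K] H) ⊗[K] (H ⊗[K] H) →ₗ[K] (H ⊗[K] H) ⊗[K] (H ⊗[K] H) :=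
  braid K H (lcoactA K H) (ractB K H) (lactA K H) (rcoactB K H)

theorem braidH3_eq_comm_of_cocomm
    (hc : (TensorProduct.comm K H H).toLinearMap ∘ₗ cm K H = cm K H) :
    braidH3 K H = (TensorProduct.comm K (H ⊗[K] H) (H ⊗[K] H)).toLinearMap := by
  apply TensorProduct.ext_fourfold'
  intro k l g h
  simp [braid, lcoactA, rcoactB, lactA, ractB, c1_eq_includeRight_of_cocomm K H hc,
    (c2_eq_includeLeft_iff K H).mpr hc]

theorem braidH3_tmul_one (l : H) :
    braidH3 K H (((1 : H) ⊗ₜ l) ⊗ₜ ((1 : H) ⊗ₜ (1 : H))) =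
      ((1 : H) ⊗ₜ (1 : H)) ⊗ₜ ((1 : H) ⊗ₜ l) := by
  simp [braid, lcoactA, rcoactB, lactA, ractB, c1, c2, Algebra.TensorProduct.one_def]

theorem braidH3_one_tmul (l : H) :
    braidH3 K H (((1 : H) ⊗ₜ (1 : H)) ⊗ₜ ((1 : H) ⊗ₜ l)) =
      TensorProduct.map (includeRight : H →ₐ[K] H ⊗[K] H).toLinearMap
        (includeRight : H →ₐ[K] H ⊗[K] H).toLinearMap (c2 K H l) := by
  have hc1 : c1 K H 1 = (1 : H) ⊗ₜ (1 : H) := by simp [c1, Algebra.TensorProduct.one_def]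
  simp only [braid, comp_apply, TensorProduct.map_tmul, lcoactA, rcoactB, LinearEquiv.coe_coe,
    rTensor_tmul, lTensor_tmul, hc1]
  induction c2 K H l using TensorProduct.induction_on with
  | zero => simp
  | tmul a b => simp [lactA, ractB]
  | add x y hx hy => simp only [tmul_add, map_add, hx, hy]

theorem c2_eq_includeLeft_of_braidH3_comp_braidH3 (hψ : braidH3 K H ∘ₗ braidH3 K H = .id) :
    c2 K H = (includeLeft : H →ₐ[K] H ⊗[K] H).toLinearMap := by
  ext l
  have h := LinearMap.congr_fun hψ (((1 : H) ⊗ₜ l) ⊗ₜ ((1 : H) ⊗ₜ (1 : H)))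
  rw [comp_apply, braidH3_tmul_one, braidH3_one_tmul, id_apply] at h
  exact map_includeRight_includeRight_injective (h.trans (by simp))

end YDL

theorem statement14_general (K : Type) [Field K] (H : Type) [Ring H] [HopfAlgebra K H] :
    YDL.braid K H (YDL.lcoactA K H) (YDL.ractB K H) (YDL.lactA K H) (YDL.rcoactB K H)
        ∘ₗ YDL.braid K H (YDL.lcoactA K H) (YDL.ractB K H) (YDL.lactA K H) (YDL.rcoactB K H)
      = LinearMap.id
    ↔ ∀ h : H, (TensorProduct.comm K H H) (YDL.cm K H h) = YDL.cm K H h := by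
  constructor
  · intro hψ
    exact LinearMap.ext_iff.mp <|
      (YDL.c2_eq_includeLeft_iff K H).mp (YDL.c2_eq_includeLeft_of_braidH3_comp_braidH3 K H hψ)
  · intro hc
    change YDL.braidH3 K H ∘ₗ YDL.braidH3 K H = _
    rw [YDL.braidH3_eq_comm_of_cocomm K H (LinearMap.ext hc), TensorProduct.comm_comp_comm]

/-- the braiding `ψ_{H₃,H₃}` is a symmetry iff `H` is
cocommutative. -/
theorem statement14 (K : Type) [Field K] (H : Type) [Ring H] [HopfAlgebra K H]
    (hS : Function.Bijective (YDL.sa K H)) :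
    YDL.braid K H (YDL.lcoactA K H) (YDL.ractB K H) (YDL.lactA K H) (YDL.rcoactB K H)
        ∘ₗ YDL.braid K H (YDL.lcoactA K H) (YDL.ractB K H) (YDL.lactA K H) (YDL.rcoactB K H)
      = LinearMap.id
    ↔ ∀ h : H, (TensorProduct.comm K H H) (YDL.cm K H h) = YDL.cm K H h :=
  statement14_general K H
end
end

section
/- Let H be a Hopf algebra with bijective antipode and suppose (H,·,ρ) is a left-left Yetter-Drinfel'd module over H where the left action is the multiplication of H. If the Yetter-Drinfel'd braiding ψ(k⊗g)=k₍₋₁₎g⊗k₍₀₎ satisfies ψ²=id, then there exists R∈H⊗H such that (H,R) is a triangular Hopf algebra and ρ(k)=R²⊗R¹k for all k∈H; in particular the flip of R equals ρ(1). -/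
noncomputable section
open TensorProduct

/-!
Write `ψ(x ⊗ y) = ρ(x) (y ⊗ 1)`. This map sends `u (1 ⊗ a)` to `ψ(u) (a ⊗ 1)` and `1 ⊗ 1` to
`W := ρ(1)`, so `ψ² = id` forces `ρ(a) = W (1 ⊗ a)` and `ψ(u) = W τ(u)`; in particular
`W τ(W) = 1`, and `R := τ(W)` is a two-sided inverse of `W`. Coassociativity of `ρ` at `1` reads
`(Δ ⊗ id) W = W₂₃ W₁₃`, which gives (QT1) for `R = W⁻¹` and, after flipping, (QT2). The
Yetter–Drinfel'd condition at `h ⊗ 1` reads `Δ(h) W = W τ(Δ h)`, which is (QT3). Counitality of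
`ρ` gives one half of (QT4); the other half follows because `id ⊗ ε` is an algebra map.
-/

namespace YDL

lemma map_inverse_eq_mul_rev {M N F : Type} [Monoid M] [Monoid N] [FunLike F M N]
    [MonoidHomClass F M N] {f g h : F} {w r : M} (hwr : w * r = 1) (hrw : r * w = 1)
    (hf : f w = g w * h w) : f r = h r * g r := by
  refine (left_inv_eq_right_inv (a := f w) ?_ (by rw [← map_mul, hwr, map_one])).symm
  rw [hf, mul_assoc, ← mul_assoc (g r), ← map_mul, hrw, map_one, one_mul, ← map_mul, hrw, map_one]

section TensorSquare

variable {K A : Type} [CommSemiring K] [Semiring A] [Algebra K A]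

lemma comm_mul_eq_one_of_mul_comm_eq_one {x : A ⊗[K] A}
    (h : x * TensorProduct.comm K A A x = 1) : TensorProduct.comm K A A x * x = 1 := by
  have h' := congr(Algebra.TensorProduct.comm K A A $h)
  rw [map_mul, map_one] at h'
  change TensorProduct.comm K A A x * TensorProduct.comm K A A (TensorProduct.comm K A A x) = 1
    at h'
  rwa [TensorProduct.comm_comm] at h'

lemma map_mul'_mul'_tensorTensorTensorComm (u v : A ⊗[K] A) :
    TensorProduct.map (LinearMap.mul' K A) (LinearMap.mul' K A)
      (tensorTensorTensorComm K A A A A (u ⊗ₜ v)) = u * v := by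
  induction u using TensorProduct.induction_on with
  | zero => simp
  | tmul a b =>
    induction v using TensorProduct.induction_on with
    | zero => simp
    | tmul c d => simp
    | add v w hv hw => simp_all [tmul_add, mul_add]
  | add u w hu hw => simp_all [add_tmul, add_mul]

end TensorSquare

section MulBraid

variable {K H : Type} [CommSemiring K] [Semiring H] [Algebra K H]

/-- The braiding `x ⊗ y ↦ x₍₋₁₎ y ⊗ x₍₀₎` of `H`, acting on itself by multiplication and
coacting by `ρ`. -/
def mulBraid (ρ : H →ₗ[K] H ⊗[K] H) : H ⊗[K] H →ₗ[K] H ⊗[K] H :=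
  (LinearMap.mul' K H).rTensor H ∘ₗ (TensorProduct.assoc K H H H).symm.toLinearMap
    ∘ₗ (TensorProduct.comm K H H).toLinearMap.lTensor H
    ∘ₗ (TensorProduct.assoc K H H H).toLinearMap ∘ₗ ρ.rTensor H

lemma mulBraid_tmul (ρ : H →ₗ[K] H ⊗[K] H) (x y : H) :
    mulBraid ρ (x ⊗ₜ y) = ρ x * (y ⊗ₜ 1) := by
  simp only [mulBraid, LinearMap.coe_comp, Function.comp_apply, LinearMap.rTensor_tmul,
    LinearEquiv.coe_coe]
  induction ρ x using TensorProduct.induction_on with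
  | zero => simp
  | tmul p q => simp
  | add u v hu hv => simp_all [add_tmul, add_mul]

lemma mulBraid_mul_one_tmul (ρ : H →ₗ[K] H ⊗[K] H) (u : H ⊗[K] H) (a : H) :
    mulBraid ρ (u * (1 ⊗ₜ a)) = mulBraid ρ u * (a ⊗ₜ 1) := by
  induction u using TensorProduct.induction_on with
  | zero => simp
  | tmul x y => simp [mulBraid_tmul, mul_assoc]
  | add u v hu hv => simp_all [add_mul]

lemma mulBraid_one (ρ : H →ₗ[K] H ⊗[K] H) : mulBraid ρ 1 = ρ 1 := by
  rw [Algebra.TensorProduct.one_def, mulBraid_tmul, ← Algebra.TensorProduct.one_def, mul_one]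

variable {ρ : H →ₗ[K] H ⊗[K] H}

lemma eq_apply_one_mul_of_involutive (hψ : Function.Involutive (mulBraid ρ)) (a : H) :
    ρ a = ρ 1 * (1 ⊗ₜ a) := by
  have : mulBraid ρ (ρ 1 * (1 ⊗ₜ a)) = a ⊗ₜ 1 := by
    rw [mulBraid_mul_one_tmul, ← mulBraid_one, hψ, one_mul]
  rw [← hψ (ρ 1 * (1 ⊗ₜ a)), this, mulBraid_tmul, ← Algebra.TensorProduct.one_def, mul_one]

lemma mulBraid_eq_mul_comm (hψ : Function.Involutive (mulBraid ρ)) (u : H ⊗[K] H) :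
    mulBraid ρ u = ρ 1 * TensorProduct.comm K H H u := by
  induction u using TensorProduct.induction_on with
  | zero => simp
  | tmul x y => simp [mulBraid_tmul, eq_apply_one_mul_of_involutive hψ x, mul_assoc]
  | add u v hu hv => simp_all [mul_add]

lemma apply_one_mul_comm_eq_one (hψ : Function.Involutive (mulBraid ρ)) :
    ρ 1 * TensorProduct.comm K H H (ρ 1) = 1 := by
  rw [← mulBraid_eq_mul_comm hψ, ← mulBraid_one, hψ]

end MulBraid

section Triangular

variable {K H : Type} [Field K] [Ring H] [HopfAlgebra K H]

lemma rTensor_comul_eq_of_inverse {w r : H ⊗[K] H} (hwr : w * r = 1) (hrw : r * w = 1)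
    (hw : (cm K H).rTensor H w = i23 K H w * i13 K H w) :
    (cm K H).rTensor H r = i13 K H r * i23 K H r :=
  map_inverse_eq_mul_rev
    (f := Algebra.TensorProduct.map (Bialgebra.comulAlgHom K H) (AlgHom.id K H))
    (g := Algebra.TensorProduct.map Algebra.TensorProduct.includeRight (AlgHom.id K H))
    (h := Algebra.TensorProduct.map (Algebra.TensorProduct.includeLeft (S := K))
      (AlgHom.id K H))
    hwr hrw hw

lemma comm_i23 (u : H ⊗[K] H) :
    TensorProduct.comm K (H ⊗[K] H) H (i23 K H u) = j13 K H (TensorProduct.comm K H H u) := by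
  induction u using TensorProduct.induction_on with
  | zero => simp
  | tmul x y => rfl
  | add u v hu hv => simp_all

lemma comm_i13 (u : H ⊗[K] H) :
    TensorProduct.comm K (H ⊗[K] H) H (i13 K H u) = j12 K H (TensorProduct.comm K H H u) := by
  induction u using TensorProduct.induction_on with
  | zero => simp
  | tmul x y => rfl
  | add u v hu hv => simp_all

lemma lTensor_comul_comm {w : H ⊗[K] H} (hw : (cm K H).rTensor H w = i23 K H w * i13 K H w) :
    (cm K H).lTensor H (TensorProduct.comm K H H w)
      = j13 K H (TensorProduct.comm K H H w) * j12 K H (TensorProduct.comm K H H w) := by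
  rw [LinearMap.lTensor_comm, hw, ← comm_i23, ← comm_i13]
  exact map_mul (Algebra.TensorProduct.comm K (H ⊗[K] H) H) _ _

lemma rid_lTensor_counit_eq_one_of_mul_eq_one {w r : H ⊗[K] H} (hwr : w * r = 1)
    (hr : TensorProduct.rid K H ((cu K H).lTensor H r) = 1) :
    TensorProduct.rid K H ((cu K H).lTensor H w) = 1 := by
  let φ : H ⊗[K] H →ₐ[K] H := (Algebra.TensorProduct.rid K K H).toAlgHom.comp
    (Algebra.TensorProduct.map (AlgHom.id K H) (Bialgebra.counitAlgHom K H))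
  change φ r = 1 at hr
  change φ w = 1
  simpa [hr] using congr(φ $hwr)

theorem isTriangular_comm {w : H ⊗[K] H} (hinv : w * TensorProduct.comm K H H w = 1)
    (hcounit : TensorProduct.lid K H ((cu K H).rTensor H w) = 1)
    (hcoassoc : (cm K H).rTensor H w = i23 K H w * i13 K H w)
    (hconj : ∀ h : H, cm K H h * w = w * TensorProduct.comm K H H (cm K H h)) :
    IsTriangular K H (TensorProduct.comm K H H w) := by
  set r := TensorProduct.comm K H H w with hr
  have hrw : r * w = 1 := comm_mul_eq_one_of_mul_comm_eq_one hinv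
  have hcounit' : TensorProduct.rid K H ((cu K H).lTensor H r) = 1 := by
    rwa [LinearMap.lTensor_comm, TensorProduct.rid_comm]
  refine ⟨⟨⟨⟨r, w, hrw, hinv⟩, rfl⟩, rTensor_comul_eq_of_inverse hinv hrw hcoassoc,
    lTensor_comul_comm hcoassoc, fun h => ?_, ?_, hcounit'⟩, ?_, ?_⟩
  · calc TensorProduct.comm K H H (cm K H h) * r
        = r * (w * TensorProduct.comm K H H (cm K H h)) * r := by
          rw [← mul_assoc, hrw, one_mul]
      _ = r * cm K H h := by rw [← hconj, mul_assoc, mul_assoc, hinv, mul_one]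
  · rw [LinearMap.rTensor_comm, TensorProduct.lid_comm]
    exact rid_lTensor_counit_eq_one_of_mul_eq_one hinv hcounit'
  · rwa [hr, TensorProduct.comm_comm]
  · rwa [hr, TensorProduct.comm_comm]

end Triangular

section YetterDrinfeld

variable {K H : Type} [Field K] [Ring H] [HopfAlgebra K H] {ρ : H →ₗ[K] H ⊗[K] H}

lemma assoc_symm_tmul_mul_one_tmul (w : H ⊗[K] H) (x y : H) :
    (TensorProduct.assoc K H H H).symm (x ⊗ₜ (w * (1 ⊗ₜ y)))
      = i23 K H w * i13 K H (x ⊗ₜ y) := by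
  induction w using TensorProduct.induction_on with
  | zero => simp
  | tmul p q => simp [i23, i13]
  | add u v hu hv => simp_all [add_mul, tmul_add]

lemma rTensor_comul_apply_one
    (hco1 : (TensorProduct.assoc K H H H).toLinearMap ∘ₗ (cm K H).rTensor H ∘ₗ ρ
      = ρ.lTensor H ∘ₗ ρ)
    (hρ : ∀ a, ρ a = ρ 1 * (1 ⊗ₜ a)) :
    (cm K H).rTensor H (ρ 1) = i23 K H (ρ 1) * i13 K H (ρ 1) := by
  have hlTensor : ∀ u, (TensorProduct.assoc K H H H).symm (ρ.lTensor H u)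
      = i23 K H (ρ 1) * i13 K H u := by
    intro u
    induction u using TensorProduct.induction_on with
    | zero => simp
    | tmul x y => rw [LinearMap.lTensor_tmul, hρ y, assoc_symm_tmul_mul_one_tmul]
    | add u v hu hv => simp only [map_add, hu, hv, mul_add]
  rw [← hlTensor, ← LinearMap.comp_apply (ρ.lTensor H) ρ, ← hco1]
  simp

lemma comul_mul_apply_one
    (hyd : (mu K H).rTensor H ∘ₗ (TensorProduct.comm K H H).toLinearMap.rTensor H
        ∘ₗ (TensorProduct.assoc K H H H).symm.toLinearMap ∘ₗ ρ.lTensor H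
        ∘ₗ (mu K H).lTensor H ∘ₗ (TensorProduct.assoc K H H H).toLinearMap
        ∘ₗ (TensorProduct.comm K H H).toLinearMap.rTensor H ∘ₗ (cm K H).rTensor H
      = TensorProduct.map (mu K H) (mu K H)
        ∘ₗ (TensorProduct.tensorTensorTensorComm K H H H H).toLinearMap
        ∘ₗ TensorProduct.map (cm K H) ρ)
    (hψ : Function.Involutive (mulBraid ρ)) (h : H) :
    cm K H h * ρ 1 = ρ 1 * TensorProduct.comm K H H (cm K H h) := by
  have hlhs : ∀ v : H ⊗[K] H,
      (mu K H).rTensor H ((TensorProduct.comm K H H).toLinearMap.rTensor H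
        ((TensorProduct.assoc K H H H).symm (ρ.lTensor H ((mu K H).lTensor H
          ((TensorProduct.assoc K H H H) (v ⊗ₜ 1))))))
        = mulBraid ρ (TensorProduct.comm K H H v) := by
    intro v
    induction v using TensorProduct.induction_on with
    | zero => simp
    | tmul b a =>
      simp only [TensorProduct.assoc_tmul, LinearMap.lTensor_tmul, LinearMap.mul'_apply, mul_one,
        TensorProduct.comm_tmul, mulBraid_tmul]
      induction ρ a using TensorProduct.induction_on with
      | zero => simp
      | tmul p q => simp
      | add u w hu hw => simp_all [tmul_add, add_mul]
    | add u w hu hw => simp_all [add_tmul]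
  have hyd₁ := LinearMap.congr_fun hyd (h ⊗ₜ 1)
  simp only [LinearMap.coe_comp, LinearEquiv.coe_coe, Function.comp_apply,
    LinearMap.rTensor_tmul, TensorProduct.map_tmul, hlhs, TensorProduct.comm_comm,
    map_mul'_mul'_tensorTensorTensorComm] at hyd₁
  rw [← hyd₁, mulBraid_eq_mul_comm hψ]

end YetterDrinfeld

end YDL

theorem statement15_general (K : Type) [Field K] (H : Type) [Ring H] [HopfAlgebra K H]
    (ρ : H →ₗ[K] H ⊗[K] H)
    (hco1 : (TensorProduct.assoc K H H H).toLinearMap ∘ₗ (YDL.cm K H).rTensor H ∘ₗ ρ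
      = ρ.lTensor H ∘ₗ ρ)
    (hco2 : (TensorProduct.lid K H).toLinearMap ∘ₗ (YDL.cu K H).rTensor H ∘ₗ ρ
      = LinearMap.id)
    (hyd : (YDL.mu K H).rTensor H ∘ₗ (TensorProduct.comm K H H).toLinearMap.rTensor H
        ∘ₗ (TensorProduct.assoc K H H H).symm.toLinearMap ∘ₗ ρ.lTensor H
        ∘ₗ (YDL.mu K H).lTensor H ∘ₗ (TensorProduct.assoc K H H H).toLinearMap
        ∘ₗ (TensorProduct.comm K H H).toLinearMap.rTensor H ∘ₗ (YDL.cm K H).rTensor H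
      = TensorProduct.map (YDL.mu K H) (YDL.mu K H)
        ∘ₗ (TensorProduct.tensorTensorTensorComm K H H H H).toLinearMap
        ∘ₗ TensorProduct.map (YDL.cm K H) ρ)
    (hpsi : ((YDL.mu K H).rTensor H ∘ₗ (TensorProduct.assoc K H H H).symm.toLinearMap
        ∘ₗ (TensorProduct.comm K H H).toLinearMap.lTensor H
        ∘ₗ (TensorProduct.assoc K H H H).toLinearMap ∘ₗ ρ.rTensor H)
      ∘ₗ ((YDL.mu K H).rTensor H ∘ₗ (TensorProduct.assoc K H H H).symm.toLinearMap
        ∘ₗ (TensorProduct.comm K H H).toLinearMap.lTensor H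
        ∘ₗ (TensorProduct.assoc K H H H).toLinearMap ∘ₗ ρ.rTensor H)
      = LinearMap.id) :
    ∃ R : H ⊗[K] H, YDL.IsTriangular K H R
      ∧ (∀ a : H, ρ a = (TensorProduct.comm K H H) R * ((1 : H) ⊗ₜ[K] a))
      ∧ (TensorProduct.comm K H H) R = ρ 1 := by
  have hψ : Function.Involutive (YDL.mulBraid ρ) := LinearMap.congr_fun hpsi
  have hρ := YDL.eq_apply_one_mul_of_involutive hψ
  refine ⟨TensorProduct.comm K H H (ρ 1),
    YDL.isTriangular_comm (YDL.apply_one_mul_comm_eq_one hψ) (LinearMap.congr_fun hco2 1)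
      (YDL.rTensor_comul_apply_one hco1 hρ) (YDL.comul_mul_apply_one hyd hψ),
    fun a => ?_, TensorProduct.comm_comm K H H _⟩
  rw [TensorProduct.comm_comm, hρ]

/-- if `(H, ·, ρ)` is a left-left Yetter–Drinfel'd module with
the multiplication as action and `ψ(k ⊗ g) = k₍₋₁₎ g ⊗ k₍₀₎` satisfies
`ψ² = id`, then there is `R` making `(H, R)` triangular and
`ρ(a) = R² ⊗ R¹ a`; in particular `τ(R) = ρ(1)`. -/
theorem statement15 (K : Type) [Field K] (H : Type) [Ring H] [HopfAlgebra K H]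
    (hS : Function.Bijective (YDL.sa K H))
    (ρ : H →ₗ[K] H ⊗[K] H)
    (hco1 : (TensorProduct.assoc K H H H).toLinearMap ∘ₗ (YDL.cm K H).rTensor H ∘ₗ ρ
      = ρ.lTensor H ∘ₗ ρ)
    (hco2 : (TensorProduct.lid K H).toLinearMap ∘ₗ (YDL.cu K H).rTensor H ∘ₗ ρ
      = LinearMap.id)
    (hyd : (YDL.mu K H).rTensor H ∘ₗ (TensorProduct.comm K H H).toLinearMap.rTensor H
        ∘ₗ (TensorProduct.assoc K H H H).symm.toLinearMap ∘ₗ ρ.lTensor H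
        ∘ₗ (YDL.mu K H).lTensor H ∘ₗ (TensorProduct.assoc K H H H).toLinearMap
        ∘ₗ (TensorProduct.comm K H H).toLinearMap.rTensor H ∘ₗ (YDL.cm K H).rTensor H
      = TensorProduct.map (YDL.mu K H) (YDL.mu K H)
        ∘ₗ (TensorProduct.tensorTensorTensorComm K H H H H).toLinearMap
        ∘ₗ TensorProduct.map (YDL.cm K H) ρ)
    (hpsi : ((YDL.mu K H).rTensor H ∘ₗ (TensorProduct.assoc K H H H).symm.toLinearMap
        ∘ₗ (TensorProduct.comm K H H).toLinearMap.lTensor H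
        ∘ₗ (TensorProduct.assoc K H H H).toLinearMap ∘ₗ ρ.rTensor H)
      ∘ₗ ((YDL.mu K H).rTensor H ∘ₗ (TensorProduct.assoc K H H H).symm.toLinearMap
        ∘ₗ (TensorProduct.comm K H H).toLinearMap.lTensor H
        ∘ₗ (TensorProduct.assoc K H H H).toLinearMap ∘ₗ ρ.rTensor H)
      = LinearMap.id) :
    ∃ R : H ⊗[K] H, YDL.IsTriangular K H R
      ∧ (∀ a : H, ρ a = (TensorProduct.comm K H H) R * ((1 : H) ⊗ₜ[K] a))
      ∧ (TensorProduct.comm K H H) R = ρ 1 :=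
  statement15_general K H ρ hco1 hco2 hyd hpsi
end
end

section
/- Let (H,ζ) be a cotriangular Hopf algebra and M, N H-bicomodules viewed as Yetter-Drinfel'd-Long bimodules via h▷m=ζ(h,m₍₋₁₎)m₍₀₎, m◁h=m₍₀₎ζ(h,m₍₁₎). Then the braiding ψ_{M,N}(m⊗n)=m₍₋₁₎▷n₍₀₎⊗m₍₀₎◁n₍₁₎ is a symmetry: ψ_{N,M}∘ψ_{M,N}=id_{M⊗N}. -/
noncomputable section
open TensorProduct

/-! For a bilinear form `σ` on `H`, let `L_σ(m ⊗ n) = σ(m₍₋₁₎, n₍₋₁₎) m₍₀₎ ⊗ n₍₀₎` (`leftTwist`)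
and `R_σ(m ⊗ n) = σ(m₍₁₎, n₍₁₎) m₍₀₎ ⊗ n₍₀₎` (`rightTwist`) on `M ⊗ N`; then
`ψ_{M,N} = flip ∘ R_{ζ ∘ flip} ∘ L_ζ`. Coassociativity gives `L_φ L_σ = L_{σ * φ}` and
`R_φ R_σ = R_{φ * σ}` for the convolution product, counitality gives `L_ε = R_ε = id`, the
bicomodule condition makes the `L`s commute with the `R`s, and moving the flip across replaces `σ`
by `σ ∘ flip`. Hence `ψ_{N,M} ψ_{M,N} = R_ζ R_{ζ ∘ flip} L_{ζ ∘ flip} L_ζ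
= R_{ζ * (ζ ∘ flip)} L_{ζ * (ζ ∘ flip)}`, and cotriangularity says exactly
`ζ * (ζ ∘ flip) = ε ⊗ ε`. -/

namespace YDL

variable {K : Type} [Field K] {H : Type} [Ring H] [HopfAlgebra K H]

def pairLeft (σ : H ⊗[K] H →ₗ[K] K) (M N : Type) [AddCommGroup M] [Module K M]
    [AddCommGroup N] [Module K N] : (H ⊗[K] M) ⊗[K] (H ⊗[K] N) →ₗ[K] M ⊗[K] N :=
  (TensorProduct.lid K (M ⊗[K] N)).toLinearMap ∘ₗ σ.rTensor (M ⊗[K] N)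
    ∘ₗ (tensorTensorTensorComm K H M H N).toLinearMap

def pairRight (σ : H ⊗[K] H →ₗ[K] K) (M N : Type) [AddCommGroup M] [Module K M]
    [AddCommGroup N] [Module K N] : (M ⊗[K] H) ⊗[K] (N ⊗[K] H) →ₗ[K] M ⊗[K] N :=
  (TensorProduct.rid K (M ⊗[K] N)).toLinearMap ∘ₗ σ.lTensor (M ⊗[K] N)
    ∘ₗ (tensorTensorTensorComm K M H N H).toLinearMap

variable {M N M' N' : Type} [AddCommGroup M] [Module K M] [AddCommGroup N] [Module K N]
  [AddCommGroup M'] [Module K M'] [AddCommGroup N'] [Module K N']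

@[simp] lemma pairLeft_tmul (σ : H ⊗[K] H →ₗ[K] K) (a b : H) (x : M) (y : N) :
    pairLeft σ M N ((a ⊗ₜ x) ⊗ₜ (b ⊗ₜ y)) = σ (a ⊗ₜ b) • (x ⊗ₜ y) := by
  simp [pairLeft]

@[simp] lemma pairRight_tmul (σ : H ⊗[K] H →ₗ[K] K) (a b : H) (x : M) (y : N) :
    pairRight σ M N ((x ⊗ₜ a) ⊗ₜ (y ⊗ₜ b)) = σ (a ⊗ₜ b) • (x ⊗ₜ y) := by
  simp [pairRight]

lemma map_comp_pairLeft (σ : H ⊗[K] H →ₗ[K] K) (f : M →ₗ[K] M') (g : N →ₗ[K] N') :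
    map f g ∘ₗ pairLeft σ M N
      = pairLeft σ M' N' ∘ₗ map (f.lTensor H) (g.lTensor H) := by
  ext; simp

lemma map_comp_pairRight (σ : H ⊗[K] H →ₗ[K] K) (f : M →ₗ[K] M') (g : N →ₗ[K] N') :
    map f g ∘ₗ pairRight σ M N
      = pairRight σ M' N' ∘ₗ map (f.rTensor H) (g.rTensor H) := by
  ext; simp

lemma comm_comp_pairLeft (σ : H ⊗[K] H →ₗ[K] K) :
    (TensorProduct.comm K N M).toLinearMap ∘ₗ pairLeft σ N M
      = pairLeft (σ ∘ₗ (TensorProduct.comm K H H).toLinearMap) M N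
        ∘ₗ (TensorProduct.comm K (H ⊗[K] N) (H ⊗[K] M)).toLinearMap := by
  ext; simp

lemma comm_comp_pairRight (σ : H ⊗[K] H →ₗ[K] K) :
    (TensorProduct.comm K N M).toLinearMap ∘ₗ pairRight σ N M
      = pairRight (σ ∘ₗ (TensorProduct.comm K H H).toLinearMap) M N
        ∘ₗ (TensorProduct.comm K (N ⊗[K] H) (M ⊗[K] H)).toLinearMap := by
  ext; simp

lemma pairLeft_comp_pairRight (σ τ : H ⊗[K] H →ₗ[K] K) :
    pairLeft σ M N ∘ₗ pairRight τ (H ⊗[K] M) (H ⊗[K] N)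
        ∘ₗ map (TensorProduct.assoc K H M H).symm.toLinearMap
          (TensorProduct.assoc K H N H).symm.toLinearMap
      = pairRight τ M N ∘ₗ pairLeft σ (M ⊗[K] H) (N ⊗[K] H) := by
  ext; simp [smul_smul, mul_comm]

lemma pairLeft_epsBoth :
    pairLeft (epsBoth K H) M N
      = map ((TensorProduct.lid K M).toLinearMap ∘ₗ (cu K H).rTensor M)
          ((TensorProduct.lid K N).toLinearMap ∘ₗ (cu K H).rTensor N) := by
  ext; simp [epsBoth, ← smul_tmul', smul_smul, mul_comm]

lemma pairRight_epsBoth :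
    pairRight (epsBoth K H) M N
      = map ((TensorProduct.rid K M).toLinearMap ∘ₗ (cu K H).lTensor M)
          ((TensorProduct.rid K N).toLinearMap ∘ₗ (cu K H).lTensor N) := by
  ext; simp [epsBoth, ← smul_tmul', smul_smul, mul_comm]

lemma pairLeft_comp_pairLeft_comul (σ τ : H ⊗[K] H →ₗ[K] K) :
    pairLeft τ M N ∘ₗ pairLeft σ (H ⊗[K] M) (H ⊗[K] N)
        ∘ₗ map ((TensorProduct.assoc K H H M).toLinearMap ∘ₗ (cm K H).rTensor M)
          ((TensorProduct.assoc K H H N).toLinearMap ∘ₗ (cm K H).rTensor N)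
      = pairLeft (conv K H σ τ) M N := by
  ext a x b y
  simp only [TensorProduct.AlgebraTensorModule.curry_apply, TensorProduct.curry_apply,
    LinearMap.coe_restrictScalars, LinearMap.comp_apply, map_tmul,
    LinearMap.rTensor_tmul, pairLeft_tmul, conv, cm2, LinearEquiv.coe_coe]
  generalize cm K H a = A
  generalize cm K H b = B
  induction A using TensorProduct.induction_on with
  | zero => simp
  | add A₁ A₂ h₁ h₂ => simp only [add_tmul, map_add, add_smul, h₁, h₂]
  | tmul a₁ a₂ =>
    induction B using TensorProduct.induction_on with
    | zero => simp
    | add B₁ B₂ h₁ h₂ => simp only [add_tmul, tmul_add, map_add, add_smul, h₁, h₂]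
    | tmul b₁ b₂ => simp [smul_smul]

lemma pairRight_comp_pairRight_comul (σ τ : H ⊗[K] H →ₗ[K] K) :
    pairRight τ M N ∘ₗ pairRight σ (M ⊗[K] H) (N ⊗[K] H)
        ∘ₗ map ((TensorProduct.assoc K M H H).symm.toLinearMap ∘ₗ (cm K H).lTensor M)
          ((TensorProduct.assoc K N H H).symm.toLinearMap ∘ₗ (cm K H).lTensor N)
      = pairRight (conv K H τ σ) M N := by
  ext x a y b
  simp only [TensorProduct.AlgebraTensorModule.curry_apply, TensorProduct.curry_apply,
    LinearMap.coe_restrictScalars, LinearMap.comp_apply, map_tmul,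
    LinearMap.lTensor_tmul, pairRight_tmul, conv, cm2, LinearEquiv.coe_coe]
  generalize cm K H a = A
  generalize cm K H b = B
  induction A using TensorProduct.induction_on with
  | zero => simp
  | add A₁ A₂ h₁ h₂ => simp only [add_tmul, tmul_add, map_add, add_smul, h₁, h₂]
  | tmul a₁ a₂ =>
    induction B using TensorProduct.induction_on with
    | zero => simp
    | add B₁ B₂ h₁ h₂ => simp only [tmul_add, map_add, add_smul, h₁, h₂]
    | tmul b₁ b₂ => simp [smul_smul, mul_comm]

def leftTwist (σ : H ⊗[K] H →ₗ[K] K) (lcoM : M →ₗ[K] H ⊗[K] M) (lcoN : N →ₗ[K] H ⊗[K] N) :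
    M ⊗[K] N →ₗ[K] M ⊗[K] N :=
  pairLeft σ M N ∘ₗ map lcoM lcoN

def rightTwist (σ : H ⊗[K] H →ₗ[K] K) (rcoM : M →ₗ[K] M ⊗[K] H) (rcoN : N →ₗ[K] N ⊗[K] H) :
    M ⊗[K] N →ₗ[K] M ⊗[K] N :=
  pairRight σ M N ∘ₗ map rcoM rcoN

lemma leftTwist_comp_leftTwist (σ τ : H ⊗[K] H →ₗ[K] K)
    {lcoM : M →ₗ[K] H ⊗[K] M} {lcoN : N →ₗ[K] H ⊗[K] N}
    (hM : (TensorProduct.assoc K H H M).toLinearMap ∘ₗ (cm K H).rTensor M ∘ₗ lcoM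
      = lcoM.lTensor H ∘ₗ lcoM)
    (hN : (TensorProduct.assoc K H H N).toLinearMap ∘ₗ (cm K H).rTensor N ∘ₗ lcoN
      = lcoN.lTensor H ∘ₗ lcoN) :
    leftTwist τ lcoM lcoN ∘ₗ leftTwist σ lcoM lcoN = leftTwist (conv K H σ τ) lcoM lcoN := by
  calc leftTwist τ lcoM lcoN ∘ₗ leftTwist σ lcoM lcoN
      = pairLeft τ M N ∘ₗ (map lcoM lcoN ∘ₗ pairLeft σ M N)
          ∘ₗ map lcoM lcoN := rfl
    _ = pairLeft τ M N ∘ₗ pairLeft σ (H ⊗[K] M) (H ⊗[K] N)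
          ∘ₗ map (lcoM.lTensor H ∘ₗ lcoM) (lcoN.lTensor H ∘ₗ lcoN) := by
      rw [map_comp_pairLeft, TensorProduct.map_comp]; rfl
    _ = leftTwist (conv K H σ τ) lcoM lcoN := by
      rw [← hM, ← hN, leftTwist, ← pairLeft_comp_pairLeft_comul]
      simp only [LinearMap.comp_assoc, TensorProduct.map_comp]

lemma rightTwist_comp_rightTwist (σ τ : H ⊗[K] H →ₗ[K] K)
    {rcoM : M →ₗ[K] M ⊗[K] H} {rcoN : N →ₗ[K] N ⊗[K] H}
    (hM : (TensorProduct.assoc K M H H).toLinearMap ∘ₗ rcoM.rTensor H ∘ₗ rcoM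
      = (cm K H).lTensor M ∘ₗ rcoM)
    (hN : (TensorProduct.assoc K N H H).toLinearMap ∘ₗ rcoN.rTensor H ∘ₗ rcoN
      = (cm K H).lTensor N ∘ₗ rcoN) :
    rightTwist τ rcoM rcoN ∘ₗ rightTwist σ rcoM rcoN = rightTwist (conv K H τ σ) rcoM rcoN := by
  have hM' : rcoM.rTensor H ∘ₗ rcoM
      = (TensorProduct.assoc K M H H).symm.toLinearMap ∘ₗ (cm K H).lTensor M ∘ₗ rcoM := by
    rw [← hM, ← LinearMap.comp_assoc, LinearEquiv.symm_comp, LinearMap.id_comp]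
  have hN' : rcoN.rTensor H ∘ₗ rcoN
      = (TensorProduct.assoc K N H H).symm.toLinearMap ∘ₗ (cm K H).lTensor N ∘ₗ rcoN := by
    rw [← hN, ← LinearMap.comp_assoc, LinearEquiv.symm_comp, LinearMap.id_comp]
  calc rightTwist τ rcoM rcoN ∘ₗ rightTwist σ rcoM rcoN
      = pairRight τ M N ∘ₗ (map rcoM rcoN ∘ₗ pairRight σ M N)
          ∘ₗ map rcoM rcoN := rfl
    _ = pairRight τ M N ∘ₗ pairRight σ (M ⊗[K] H) (N ⊗[K] H)
          ∘ₗ map (rcoM.rTensor H ∘ₗ rcoM) (rcoN.rTensor H ∘ₗ rcoN) := by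
      rw [map_comp_pairRight, TensorProduct.map_comp]; rfl
    _ = rightTwist (conv K H τ σ) rcoM rcoN := by
      rw [hM', hN', rightTwist, ← pairRight_comp_pairRight_comul]
      simp only [LinearMap.comp_assoc, TensorProduct.map_comp]

lemma leftTwist_epsBoth {lcoM : M →ₗ[K] H ⊗[K] M} {lcoN : N →ₗ[K] H ⊗[K] N}
    (hM : (TensorProduct.lid K M).toLinearMap ∘ₗ (cu K H).rTensor M ∘ₗ lcoM = LinearMap.id)
    (hN : (TensorProduct.lid K N).toLinearMap ∘ₗ (cu K H).rTensor N ∘ₗ lcoN = LinearMap.id) :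
    leftTwist (epsBoth K H) lcoM lcoN = LinearMap.id := by
  rw [leftTwist, pairLeft_epsBoth, ← TensorProduct.map_comp, LinearMap.comp_assoc,
    LinearMap.comp_assoc, hM, hN, TensorProduct.map_id]

lemma rightTwist_epsBoth {rcoM : M →ₗ[K] M ⊗[K] H} {rcoN : N →ₗ[K] N ⊗[K] H}
    (hM : (TensorProduct.rid K M).toLinearMap ∘ₗ (cu K H).lTensor M ∘ₗ rcoM = LinearMap.id)
    (hN : (TensorProduct.rid K N).toLinearMap ∘ₗ (cu K H).lTensor N ∘ₗ rcoN = LinearMap.id) :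
    rightTwist (epsBoth K H) rcoM rcoN = LinearMap.id := by
  rw [rightTwist, pairRight_epsBoth, ← TensorProduct.map_comp, LinearMap.comp_assoc,
    LinearMap.comp_assoc, hM, hN, TensorProduct.map_id]

lemma comm_comp_leftTwist (σ : H ⊗[K] H →ₗ[K] K) (lcoM : M →ₗ[K] H ⊗[K] M)
    (lcoN : N →ₗ[K] H ⊗[K] N) :
    (TensorProduct.comm K N M).toLinearMap ∘ₗ leftTwist σ lcoN lcoM
      = leftTwist (σ ∘ₗ (TensorProduct.comm K H H).toLinearMap) lcoM lcoN
        ∘ₗ (TensorProduct.comm K N M).toLinearMap := by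
  rw [leftTwist, leftTwist, ← LinearMap.comp_assoc, comm_comp_pairLeft, LinearMap.comp_assoc,
    LinearMap.comp_assoc, TensorProduct.map_comp_comm_eq]

lemma comm_comp_rightTwist (σ : H ⊗[K] H →ₗ[K] K) (rcoM : M →ₗ[K] M ⊗[K] H)
    (rcoN : N →ₗ[K] N ⊗[K] H) :
    (TensorProduct.comm K N M).toLinearMap ∘ₗ rightTwist σ rcoN rcoM
      = rightTwist (σ ∘ₗ (TensorProduct.comm K H H).toLinearMap) rcoM rcoN
        ∘ₗ (TensorProduct.comm K N M).toLinearMap := by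
  rw [rightTwist, rightTwist, ← LinearMap.comp_assoc, comm_comp_pairRight, LinearMap.comp_assoc,
    LinearMap.comp_assoc, TensorProduct.map_comp_comm_eq]

lemma leftTwist_comp_rightTwist (σ τ : H ⊗[K] H →ₗ[K] K)
    {lcoM : M →ₗ[K] H ⊗[K] M} {rcoM : M →ₗ[K] M ⊗[K] H}
    {lcoN : N →ₗ[K] H ⊗[K] N} {rcoN : N →ₗ[K] N ⊗[K] H}
    (hM : rcoM.lTensor H ∘ₗ lcoM
      = (TensorProduct.assoc K H M H).toLinearMap ∘ₗ lcoM.rTensor H ∘ₗ rcoM)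
    (hN : rcoN.lTensor H ∘ₗ lcoN
      = (TensorProduct.assoc K H N H).toLinearMap ∘ₗ lcoN.rTensor H ∘ₗ rcoN) :
    leftTwist σ lcoM lcoN ∘ₗ rightTwist τ rcoM rcoN
      = rightTwist τ rcoM rcoN ∘ₗ leftTwist σ lcoM lcoN := by
  have hM' : lcoM.rTensor H ∘ₗ rcoM
      = (TensorProduct.assoc K H M H).symm.toLinearMap ∘ₗ rcoM.lTensor H ∘ₗ lcoM := by
    rw [hM, ← LinearMap.comp_assoc, LinearEquiv.symm_comp, LinearMap.id_comp]
  have hN' : lcoN.rTensor H ∘ₗ rcoN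
      = (TensorProduct.assoc K H N H).symm.toLinearMap ∘ₗ rcoN.lTensor H ∘ₗ lcoN := by
    rw [hN, ← LinearMap.comp_assoc, LinearEquiv.symm_comp, LinearMap.id_comp]
  calc leftTwist σ lcoM lcoN ∘ₗ rightTwist τ rcoM rcoN
      = pairLeft σ M N ∘ₗ (map lcoM lcoN ∘ₗ pairRight τ M N)
          ∘ₗ map rcoM rcoN := rfl
    _ = pairLeft σ M N ∘ₗ pairRight τ (H ⊗[K] M) (H ⊗[K] N)
          ∘ₗ map (lcoM.rTensor H ∘ₗ rcoM) (lcoN.rTensor H ∘ₗ rcoN) := by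
      rw [map_comp_pairRight, TensorProduct.map_comp]; rfl
    _ = (pairLeft σ M N ∘ₗ pairRight τ (H ⊗[K] M) (H ⊗[K] N)
          ∘ₗ map (TensorProduct.assoc K H M H).symm.toLinearMap
            (TensorProduct.assoc K H N H).symm.toLinearMap)
          ∘ₗ map (rcoM.lTensor H ∘ₗ lcoM) (rcoN.lTensor H ∘ₗ lcoN) := by
      rw [hM', hN', TensorProduct.map_comp]; rfl
    _ = pairRight τ M N ∘ₗ (map rcoM rcoN ∘ₗ pairLeft σ M N)
          ∘ₗ map lcoM lcoN := by
      rw [pairLeft_comp_pairRight, map_comp_pairLeft, TensorProduct.map_comp]; rfl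

lemma braid_eq_comm_comp_rightTwist_comp_leftTwist (z : H ⊗[K] H →ₗ[K] K)
    (lcoM : M →ₗ[K] H ⊗[K] M) (rcoM : M →ₗ[K] M ⊗[K] H)
    {lcoN : N →ₗ[K] H ⊗[K] N} {rcoN : N →ₗ[K] N ⊗[K] H}
    (hN : rcoN.lTensor H ∘ₗ lcoN
      = (TensorProduct.assoc K H N H).toLinearMap ∘ₗ lcoN.rTensor H ∘ₗ rcoN) :
    braid K H lcoM (ractZ K H rcoM z) (lactZ K H lcoN z) rcoN
      = (TensorProduct.comm K M N).toLinearMap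
        ∘ₗ rightTwist (z ∘ₗ (TensorProduct.comm K H H).toLinearMap) rcoM rcoN
        ∘ₗ leftTwist z lcoM lcoN := by
  set A : H ⊗[K] (H ⊗[K] N) →ₗ[K] N := (TensorProduct.lid K N).toLinearMap ∘ₗ z.rTensor N
    ∘ₗ (TensorProduct.assoc K H H N).symm.toLinearMap
  set B : (M ⊗[K] H) ⊗[K] H →ₗ[K] M := (TensorProduct.rid K M).toLinearMap ∘ₗ z.lTensor M
    ∘ₗ (TensorProduct.comm K H H).toLinearMap.lTensor M ∘ₗ (TensorProduct.assoc K M H H).toLinearMap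
  calc braid K H lcoM (ractZ K H rcoM z) (lactZ K H lcoN z) rcoN
      = (map A B ∘ₗ map (lcoN.lTensor H) (rcoM.rTensor H))
          ∘ₗ (tensorTensorTensorComm K H M N H).toLinearMap ∘ₗ map lcoM rcoN := by
        rw [← TensorProduct.map_comp A B (lcoN.lTensor H) (rcoM.rTensor H)]; rfl
    _ = map A B ∘ₗ ((tensorTensorTensorComm K H (M ⊗[K] H) (H ⊗[K] N) H).toLinearMap
          ∘ₗ map (rcoM.lTensor H) (lcoN.rTensor H)) ∘ₗ map lcoM rcoN :=
        congrArg (fun T ↦ map A B ∘ₗ T ∘ₗ map lcoM rcoN)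
          (tensorTensorTensorComm_comp_map K LinearMap.id rcoM lcoN LinearMap.id).symm
    _ = (map A B ∘ₗ (tensorTensorTensorComm K H (M ⊗[K] H) (H ⊗[K] N) H).toLinearMap)
          ∘ₗ map (rcoM.lTensor H ∘ₗ lcoM) (lcoN.rTensor H ∘ₗ rcoN) := by
        rw [TensorProduct.map_comp (rcoM.lTensor H) (lcoN.rTensor H) lcoM rcoN]; rfl
    _ = ((TensorProduct.comm K M N).toLinearMap
          ∘ₗ pairRight (z ∘ₗ (TensorProduct.comm K H H).toLinearMap) M N
          ∘ₗ pairLeft z (M ⊗[K] H) (N ⊗[K] H)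
          ∘ₗ (TensorProduct.assoc K H N H).toLinearMap.lTensor (H ⊗[K] (M ⊗[K] H)))
          ∘ₗ map (rcoM.lTensor H ∘ₗ lcoM) (lcoN.rTensor H ∘ₗ rcoN) := by
        congr 1
        ext
        simp [A, B, ← smul_tmul', smul_smul, mul_comm]
    _ = (TensorProduct.comm K M N).toLinearMap
          ∘ₗ pairRight (z ∘ₗ (TensorProduct.comm K H H).toLinearMap) M N
          ∘ₗ pairLeft z (M ⊗[K] H) (N ⊗[K] H)
          ∘ₗ map (rcoM.lTensor H ∘ₗ lcoM) (rcoN.lTensor H ∘ₗ lcoN) := by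
        rw [hN, ← LinearMap.lTensor_comp_map M (TensorProduct.assoc K H N H).toLinearMap]; rfl
    _ = (TensorProduct.comm K M N).toLinearMap
          ∘ₗ pairRight (z ∘ₗ (TensorProduct.comm K H H).toLinearMap) M N
          ∘ₗ (map rcoM rcoN ∘ₗ pairLeft z M N) ∘ₗ map lcoM lcoN := by
        rw [map_comp_pairLeft, TensorProduct.map_comp (rcoM.lTensor H) (rcoN.lTensor H) lcoM lcoN]
        rfl

end YDL

/-- over a cotriangular Hopf algebra `(H, ζ)` the induced
braiding on `H`-bicomodules is a symmetry: `ψ_{N,M} ∘ ψ_{M,N} = id`. -/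
theorem statement17 (K : Type) [Field K] (H : Type) [Ring H] [HopfAlgebra K H]
    (z : H ⊗[K] H →ₗ[K] K) (hz : YDL.IsCotriangular K H z)
    (M N : Type) [AddCommGroup M] [Module K M] [AddCommGroup N] [Module K N]
    (lcoactM : M →ₗ[K] H ⊗[K] M) (rcoactM : M →ₗ[K] M ⊗[K] H)
    (lcoactN : N →ₗ[K] H ⊗[K] N) (rcoactN : N →ₗ[K] N ⊗[K] H)
    (lcoassocM : (TensorProduct.assoc K H H M).toLinearMap ∘ₗ (YDL.cm K H).rTensor M ∘ₗ lcoactM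
      = lcoactM.lTensor H ∘ₗ lcoactM)
    (lcounitM : (TensorProduct.lid K M).toLinearMap ∘ₗ (YDL.cu K H).rTensor M ∘ₗ lcoactM
      = LinearMap.id)
    (rcoassocM : (TensorProduct.assoc K M H H).toLinearMap ∘ₗ rcoactM.rTensor H ∘ₗ rcoactM
      = (YDL.cm K H).lTensor M ∘ₗ rcoactM)
    (rcounitM : (TensorProduct.rid K M).toLinearMap ∘ₗ (YDL.cu K H).lTensor M ∘ₗ rcoactM
      = LinearMap.id)
    (bicomodM : rcoactM.lTensor H ∘ₗ lcoactM
      = (TensorProduct.assoc K H M H).toLinearMap ∘ₗ lcoactM.rTensor H ∘ₗ rcoactM)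
    (lcoassocN : (TensorProduct.assoc K H H N).toLinearMap ∘ₗ (YDL.cm K H).rTensor N ∘ₗ lcoactN
      = lcoactN.lTensor H ∘ₗ lcoactN)
    (lcounitN : (TensorProduct.lid K N).toLinearMap ∘ₗ (YDL.cu K H).rTensor N ∘ₗ lcoactN
      = LinearMap.id)
    (rcoassocN : (TensorProduct.assoc K N H H).toLinearMap ∘ₗ rcoactN.rTensor H ∘ₗ rcoactN
      = (YDL.cm K H).lTensor N ∘ₗ rcoactN)
    (rcounitN : (TensorProduct.rid K N).toLinearMap ∘ₗ (YDL.cu K H).lTensor N ∘ₗ rcoactN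
      = LinearMap.id)
    (bicomodN : rcoactN.lTensor H ∘ₗ lcoactN
      = (TensorProduct.assoc K H N H).toLinearMap ∘ₗ lcoactN.rTensor H ∘ₗ rcoactN) :
    YDL.braid K H lcoactN (YDL.ractZ K H rcoactN z) (YDL.lactZ K H lcoactM z) rcoactM
      ∘ₗ YDL.braid K H lcoactM (YDL.ractZ K H rcoactM z) (YDL.lactZ K H lcoactN z) rcoactN
    = LinearMap.id := by
  have hcc : (z ∘ₗ (TensorProduct.comm K H H).toLinearMap) ∘ₗ (TensorProduct.comm K H H).toLinearMap
      = z := by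
    rw [LinearMap.comp_assoc, TensorProduct.comm_comp_comm, LinearMap.comp_id]
  rw [YDL.braid_eq_comm_comp_rightTwist_comp_leftTwist z lcoactN rcoactN bicomodM,
    YDL.braid_eq_comm_comp_rightTwist_comp_leftTwist z lcoactM rcoactM bicomodN]
  set z' := z ∘ₗ (TensorProduct.comm K H H).toLinearMap
  calc ((TensorProduct.comm K N M).toLinearMap ∘ₗ YDL.rightTwist z' rcoactN rcoactM)
        ∘ₗ YDL.leftTwist z lcoactN lcoactM ∘ₗ (TensorProduct.comm K M N).toLinearMap
        ∘ₗ YDL.rightTwist z' rcoactM rcoactN ∘ₗ YDL.leftTwist z lcoactM lcoactN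
      = YDL.rightTwist z rcoactM rcoactN ∘ₗ ((TensorProduct.comm K N M).toLinearMap
        ∘ₗ YDL.leftTwist z lcoactN lcoactM) ∘ₗ (TensorProduct.comm K M N).toLinearMap
        ∘ₗ YDL.rightTwist z' rcoactM rcoactN ∘ₗ YDL.leftTwist z lcoactM lcoactN := by
        rw [YDL.comm_comp_rightTwist, hcc]; rfl
    _ = YDL.rightTwist z rcoactM rcoactN ∘ₗ (YDL.leftTwist z' lcoactM lcoactN
        ∘ₗ YDL.rightTwist z' rcoactM rcoactN) ∘ₗ YDL.leftTwist z lcoactM lcoactN := by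
        rw [YDL.comm_comp_leftTwist, LinearMap.comp_assoc, TensorProduct.comm_comp_comm_assoc]; rfl
    _ = (YDL.rightTwist z rcoactM rcoactN ∘ₗ YDL.rightTwist z' rcoactM rcoactN)
        ∘ₗ YDL.leftTwist z' lcoactM lcoactN ∘ₗ YDL.leftTwist z lcoactM lcoactN := by
        rw [YDL.leftTwist_comp_rightTwist _ _ bicomodM bicomodN]; rfl
    _ = LinearMap.id := by
        rw [YDL.rightTwist_comp_rightTwist _ _ rcoassocM rcoassocN,
          YDL.leftTwist_comp_leftTwist _ _ lcoassocM lcoassocN, hz.cot,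
          YDL.rightTwist_epsBoth rcounitM rcounitN, YDL.leftTwist_epsBoth lcounitM lcounitN]
        rfl
end
end
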